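/- arXiv:2101.02731 — 7 statements merged into one kernel-verified Lean document; each statement's English description precedes it below -/
import Mathlib

section
/- Let a, b > 0, r > 1, T > 0, and A > 0 with bA^r > a (equivalently A > (a/b)^{1/r}). Then the terminal value problem y'(t) = a − b|y(t)|^r on [0,T], y(T) = −A, admits a unique differentiable solution y : [0,T] → ℝ. Moreover y is monotone decreasing on [0,T] and satisfies −A ≤ y(t) < −(a/b)^{1/r} for every t ∈ [0,T]. -/
/-!
The point `-(a/b)^(1/r)` is an equilibrium of the locally Lipschitz field `v y = a - b|y|^r`, and
`v ≤ 0` below it. Clamping the argument of `v` to `[-A, -(a/b)^(1/r)]` gives a bounded, globally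
Lipschitz field, for which Picard–Lindelöf yields a solution on all of `[0,T]` with `y T = -A`.
The clamped field is nonpositive, so this solution is antitone and stays above `-A`; by uniqueness
it never meets the equilibrium, so it stays below `-(a/b)^(1/r)`. Hence the clamp is inactive
along it and it solves the original problem, whose solutions are unique because `v` is locally
Lipschitz.
-/

open Set NNReal

section ODE

variable {E : Type*} [NormedAddCommGroup E] [NormedSpace ℝ E] {v : E → E} {a b t₀ : ℝ}

theorem ODE_solution_unique_of_mem_Icc_of_locallyLipschitz (hv : LocallyLipschitz v)
    {f g : ℝ → E} (hf : ∀ t ∈ Icc a b, HasDerivWithinAt f (v (f t)) (Icc a b) t)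
    (hg : ∀ t ∈ Icc a b, HasDerivWithinAt g (v (g t)) (Icc a b) t)
    (ht₀ : t₀ ∈ Icc a b) (heq : f t₀ = g t₀) : EqOn f g (Icc a b) := by
  have hfc : ContinuousOn f (Icc a b) := fun t ht ↦ (hf t ht).continuousWithinAt
  have hgc : ContinuousOn g (Icc a b) := fun t ht ↦ (hg t ht).continuousWithinAt
  set S := f '' Icc a b ∪ g '' Icc a b
  obtain ⟨K, hK⟩ := hv.locallyLipschitzOn.exists_lipschitzOnWith_of_compact
    ((isCompact_Icc.image_of_continuousOn hfc).union (isCompact_Icc.image_of_continuousOn hgc))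
  have hfS : ∀ t ∈ Icc a b, f t ∈ S := fun t ht ↦ .inl (mem_image_of_mem f ht)
  have hgS : ∀ t ∈ Icc a b, g t ∈ S := fun t ht ↦ .inr (mem_image_of_mem g ht)
  rw [← Icc_union_Icc_eq_Icc ht₀.1 ht₀.2]
  have hleft : Ioc a t₀ ⊆ Ioc a b := Ioc_subset_Ioc_right ht₀.2
  have hright : Ico t₀ b ⊆ Ico a b := Ico_subset_Ico_left ht₀.1
  refine EqOn.union ?_ ?_
  · refine ODE_solution_unique_of_mem_Icc_left (v := fun _ ↦ v) (s := fun _ ↦ S) (fun _ _ ↦ hK)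
      (hfc.mono (Icc_subset_Icc_right ht₀.2)) (fun t ht ↦ ?_)
      (fun t ht ↦ hfS t (Ioc_subset_Icc_self (hleft ht)))
      (hgc.mono (Icc_subset_Icc_right ht₀.2)) (fun t ht ↦ ?_)
      (fun t ht ↦ hgS t (Ioc_subset_Icc_self (hleft ht))) heq
    · exact (hf t (Ioc_subset_Icc_self (hleft ht))).mono_of_mem_nhdsWithin
        (Icc_mem_nhdsLE_of_mem (hleft ht))
    · exact (hg t (Ioc_subset_Icc_self (hleft ht))).mono_of_mem_nhdsWithin
        (Icc_mem_nhdsLE_of_mem (hleft ht))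
  · refine ODE_solution_unique_of_mem_Icc_right (v := fun _ ↦ v) (s := fun _ ↦ S) (fun _ _ ↦ hK)
      (hfc.mono (Icc_subset_Icc_left ht₀.1)) (fun t ht ↦ ?_)
      (fun t ht ↦ hfS t (Ico_subset_Icc_self (hright ht)))
      (hgc.mono (Icc_subset_Icc_left ht₀.1)) (fun t ht ↦ ?_)
      (fun t ht ↦ hgS t (Ico_subset_Icc_self (hright ht))) heq
    · exact (hf t (Ico_subset_Icc_self (hright ht))).mono_of_mem_nhdsWithin
        (Icc_mem_nhdsGE_of_mem (hright ht))
    · exact (hg t (Ico_subset_Icc_self (hright ht))).mono_of_mem_nhdsWithin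
        (Icc_mem_nhdsGE_of_mem (hright ht))

theorem exists_hasDerivWithinAt_Icc_of_lipschitzWith [CompleteSpace E] {K : ℝ≥0}
    (hv : LipschitzWith K v) (hbdd : Bornology.IsBounded (range v)) (ht₀ : t₀ ∈ Icc a b)
    (x₀ : E) : ∃ α : ℝ → E, α t₀ = x₀ ∧
      ∀ t ∈ Icc a b, HasDerivWithinAt α (v (α t)) (Icc a b) t := by
  obtain ⟨L, hL⟩ := isBounded_iff_forall_norm_le.1 hbdd
  have hL0 : 0 ≤ L := (norm_nonneg _).trans (hL _ (mem_range_self x₀))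
  have hPL : IsPicardLindelof (fun _ ↦ v) (⟨t₀, ht₀⟩ : Icc a b) x₀
      (L * (b - a)).toNNReal 0 L.toNNReal K := by
    refine .of_time_independent (fun x _ ↦ ?_) hv.lipschitzOnWith ?_
    · rw [Real.coe_toNNReal L hL0]
      exact hL _ (mem_range_self x)
    · rw [Real.coe_toNNReal L hL0, NNReal.coe_zero, sub_zero]
      refine le_trans ?_ (Real.le_coe_toNNReal _)
      exact mul_le_mul_of_nonneg_left (max_le (by linarith [ht₀.1]) (by linarith [ht₀.2])) hL0
  exact hPL.exists_eq_forall_mem_Icc_hasDerivWithinAt₀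

end ODE

section Clamp

variable {E : Type*} [PseudoMetricSpace E] {v : ℝ → E} {m M : ℝ}

theorem LocallyLipschitz.exists_lipschitzWith_IccExtend (hv : LocallyLipschitz v) (h : m ≤ M) :
    ∃ K, LipschitzWith K (IccExtend h ((Icc m M).domRestrict v)) := by
  obtain ⟨K, hK⟩ := hv.locallyLipschitzOn.exists_lipschitzOnWith_of_compact isCompact_Icc
  exact ⟨K * 1, (lipschitzOnWith_iff_restrict.1 hK).comp (LipschitzWith.projIcc h)⟩

theorem isBounded_range_IccExtend (hv : ContinuousOn v (Icc m M)) (h : m ≤ M) :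
    Bornology.IsBounded (range (IccExtend h ((Icc m M).domRestrict v))) := by
  refine (isCompact_Icc.image_of_continuousOn hv).isBounded.subset ?_
  rintro _ ⟨x, rfl⟩
  exact ⟨_, (projIcc m M h x).2, rfl⟩

end Clamp

theorem antitoneOn_Icc_of_hasDerivWithinAt_nonpos {f f' : ℝ → ℝ} {a b : ℝ}
    (hf : ∀ t ∈ Icc a b, HasDerivWithinAt f (f' t) (Icc a b) t)
    (hf' : ∀ t ∈ Icc a b, f' t ≤ 0) : AntitoneOn f (Icc a b) := by
  refine antitoneOn_of_hasDerivWithinAt_nonpos (f' := f') (convex_Icc a b)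
    (fun t ht ↦ (hf t ht).continuousWithinAt) (fun t ht ↦ ?_) (fun t ht ↦ ?_)
  all_goals rw [interior_Icc] at ht
  · rw [interior_Icc]
    exact (hf t (Ioo_subset_Icc_self ht)).mono Ioo_subset_Icc_self
  · exact hf' t (Ioo_subset_Icc_self ht)

theorem ODE_solution_lt_of_mem_Icc {v : ℝ → ℝ} (hv : LocallyLipschitz v) {e a b t₀ : ℝ}
    (he : v e = 0) {f : ℝ → ℝ} (hf : ∀ t ∈ Icc a b, HasDerivWithinAt f (v (f t)) (Icc a b) t)
    (ht₀ : t₀ ∈ Icc a b) (hft₀ : f t₀ < e) : ∀ t ∈ Icc a b, f t < e := by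
  intro t ht
  by_contra! hle
  have hsub : uIcc t t₀ ⊆ Icc a b := uIcc_subset_Icc ht ht₀
  obtain ⟨s, hs, hfs⟩ := intermediate_value_uIcc
    (fun t ht ↦ ((hf t (hsub ht)).continuousWithinAt.mono hsub))
    (mem_uIcc.2 (.inr ⟨hft₀.le, hle⟩))
  have hconst : ∀ t ∈ Icc a b, HasDerivWithinAt (fun _ ↦ e) (v e) (Icc a b) t :=
    fun _ _ ↦ he ▸ hasDerivWithinAt_const _ _ _
  have := ODE_solution_unique_of_mem_Icc_of_locallyLipschitz hv hf hconst (hsub hs) hfs ht₀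
  exact hft₀.ne this

section Field

variable {a b r : ℝ}

theorem locallyLipschitz_sub_mul_abs_rpow (hr : 1 < r) :
    LocallyLipschitz fun x : ℝ ↦ a - b * |x| ^ r := by
  have h : ContDiff ℝ 1 fun x : ℝ ↦ a - b * ‖x‖ ^ r :=
    contDiff_const.sub (contDiff_const.mul (contDiff_norm_rpow hr))
  simpa only [Real.norm_eq_abs] using h.locallyLipschitz

theorem mul_rpow_one_div_rpow (ha : 0 ≤ a) (hb : 0 < b) (hr : r ≠ 0) :
    b * ((a / b) ^ (1 / r)) ^ r = a := by
  rw [one_div, Real.rpow_inv_rpow (div_nonneg ha hb.le) hr]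
  field_simp

theorem div_rpow_one_div_lt {A : ℝ} (ha : 0 ≤ a) (hb : 0 < b) (hr : 0 < r) (hA : 0 ≤ A)
    (hbA : a < b * A ^ r) : (a / b) ^ (1 / r) < A := by
  calc (a / b) ^ (1 / r) < (A ^ r) ^ (1 / r) :=
        Real.rpow_lt_rpow (div_nonneg ha hb.le) ((div_lt_iff₀' hb).2 hbA) (by positivity)
    _ = A := by rw [one_div, Real.rpow_rpow_inv hA hr.ne']

theorem sub_mul_abs_neg_rpow_one_div_eq_zero (ha : 0 ≤ a) (hb : 0 < b) (hr : r ≠ 0) :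
    a - b * |-(a / b) ^ (1 / r)| ^ r = 0 := by
  rw [abs_neg, abs_of_nonneg (Real.rpow_nonneg (div_nonneg ha hb.le) _),
    mul_rpow_one_div_rpow ha hb hr, sub_self]

theorem sub_mul_abs_rpow_nonpos (ha : 0 ≤ a) (hb : 0 < b) (hr : 0 < r) {x : ℝ}
    (hx : (a / b) ^ (1 / r) ≤ |x|) : a - b * |x| ^ r ≤ 0 := by
  have := mul_le_mul_of_nonneg_left
    (Real.rpow_le_rpow (Real.rpow_nonneg (div_nonneg ha hb.le) _) hx hr.le) hb.le
  linarith [mul_rpow_one_div_rpow ha hb hr.ne']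

end Field

/-- existence, uniqueness, monotonicity and bounds for the terminal
value problem y' = a - b|y|^r on [0,T], y(T) = -A, when b A^r > a. -/
theorem stmt_0 (a b r T A : ℝ) (ha : 0 < a) (hb : 0 < b) (hr : 1 < r)
    (hT : 0 < T) (hA : 0 < A) (hbA : a < b * A ^ r) :
    ∃ y : ℝ → ℝ,
      ((∀ t ∈ Set.Icc (0:ℝ) T,
          HasDerivWithinAt y (a - b * |y t| ^ r) (Set.Icc (0:ℝ) T) t) ∧
        y T = -A ∧
        (∀ s ∈ Set.Icc (0:ℝ) T, ∀ t ∈ Set.Icc (0:ℝ) T, s ≤ t → y t ≤ y s) ∧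
        (∀ t ∈ Set.Icc (0:ℝ) T, -A ≤ y t ∧ y t < -((a / b) ^ (1 / r)))) ∧
      (∀ z : ℝ → ℝ,
        (∀ t ∈ Set.Icc (0:ℝ) T,
          HasDerivWithinAt z (a - b * |z t| ^ r) (Set.Icc (0:ℝ) T) t) →
        z T = -A → ∀ t ∈ Set.Icc (0:ℝ) T, z t = y t) := by
  set c := (a / b) ^ (1 / r)
  set v : ℝ → ℝ := fun x ↦ a - b * |x| ^ r
  have hv : LocallyLipschitz v := locallyLipschitz_sub_mul_abs_rpow hr
  have hcA : c < A := div_rpow_one_div_lt ha.le hb (by linarith) hA.le hbA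
  have hAc : -A ≤ -c := by linarith
  have hvc : v (-c) = 0 := sub_mul_abs_neg_rpow_one_div_eq_zero ha.le hb (by linarith)
  have hv_nonpos : ∀ x ∈ Icc (-A) (-c), v x ≤ 0 := fun x hx ↦
    sub_mul_abs_rpow_nonpos ha.le hb (by linarith) (le_abs.2 (.inr (by linarith [hx.2])))
  obtain ⟨K, hK⟩ := hv.exists_lipschitzWith_IccExtend hAc
  have hTmem : T ∈ Icc 0 T := ⟨hT.le, le_rfl⟩
  obtain ⟨y, hyT, hy⟩ := exists_hasDerivWithinAt_Icc_of_lipschitzWith hK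
    (isBounded_range_IccExtend hv.continuous.continuousOn hAc) hTmem (-A)
  set w := IccExtend hAc ((Icc (-A) (-c)).domRestrict v)
  have hw : ∀ x ∈ Icc (-A) (-c), w x = v x := fun x hx ↦ IccExtend_of_mem _ _ hx
  have hy_anti : AntitoneOn y (Icc 0 T) := antitoneOn_Icc_of_hasDerivWithinAt_nonpos hy
    fun t _ ↦ hv_nonpos _ (projIcc (-A) (-c) hAc (y t)).2
  have hy_lt : ∀ t ∈ Icc 0 T, y t < -c :=
    ODE_solution_lt_of_mem_Icc hK.locallyLipschitz ((hw _ ⟨hAc, le_rfl⟩).trans hvc)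
      hy hTmem (by linarith)
  have hy_ge : ∀ t ∈ Icc 0 T, -A ≤ y t := fun t ht ↦ hyT ▸ hy_anti ht hTmem ht.2
  have hy' : ∀ t ∈ Icc 0 T, HasDerivWithinAt y (v (y t)) (Icc 0 T) t := fun t ht ↦ by
    rw [← hw _ ⟨hy_ge t ht, (hy_lt t ht).le⟩]
    exact hy t ht
  refine ⟨y, ⟨hy', hyT, fun s hs t ht hst ↦ hy_anti hs ht hst,
    fun t ht ↦ ⟨hy_ge t ht, hy_lt t ht⟩⟩, fun z hz hzT t ht ↦ ?_⟩
  exact ODE_solution_unique_of_mem_Icc_of_locallyLipschitz hv hz hy' hTmem (hzT.trans hyT.symm) ht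
end

section
/- Let a, b > 0, r > 1, T > 0, A > (a/b)^{1/r}, and let F(ξ) = ∫_{−A}^{ξ} du/(b|u|^r − a), a strictly increasing bijection from [−A, −(a/b)^{1/r}) onto [0,∞). Then the function y(t) := F^{−1}(T − t) is differentiable on [0,T] and is the solution of the terminal value problem: y'(t) = a − b|y(t)|^r for all t ∈ [0,T] and y(T) = −A. -/
/-!
Write `c = (a/b)^(1/r)`. On `(-∞, -c)` the integrand `1/(b|u|^r - a)` is positive and continuous,
so `F` is strictly increasing and differentiable there, and the inverse function rule gives
`y' = -1 / F'(y) = a - b|y|^r`. `F` reaches every value in `[0, ∞)` before `-c` because,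
by convexity of `x ↦ x^r`, the integrand dominates a multiple of `1/(-c - u)`, whose integral
diverges logarithmically at `-c`.
-/

/-- The function F(ξ) = ∫_{-A}^{ξ} du/(b|u|^r - a). -/
noncomputable def Ffun (a b r A : ℝ) (ξ : ℝ) : ℝ :=
  ∫ u in (-A)..ξ, 1 / (b * |u| ^ r - a)

/-- y(t) = F⁻¹(T - t), where F⁻¹ is the inverse of F on [-A, -(a/b)^(1/r)). -/
noncomputable def ysol (a b r A T : ℝ) (t : ℝ) : ℝ :=
  Function.invFunOn (Ffun a b r A) (Set.Ico (-A) (-((a / b) ^ (1 / r)))) (T - t)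

open Set Function intervalIntegral MeasureTheory

theorem StrictMonoOn.hasDerivAt_invFunOn {f : ℝ → ℝ} {s : Set ℝ} [OrdConnected s] {x f' : ℝ}
    (hf : StrictMonoOn f s) (hs : IsOpen s) (hfc : ContinuousOn f s) (hx : x ∈ s)
    (hfx : HasDerivAt f f' x) (hf' : f' ≠ 0) :
    HasDerivAt (invFunOn f s) f'⁻¹ (f x) := by
  have hleft : LeftInvOn (invFunOn f s) f s := hf.injOn.leftInvOn_invFunOn
  have himage : f '' s ∈ nhds (f x) := by
    obtain ⟨ε, hε, hball⟩ := Metric.isOpen_iff.mp hs x hx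
    have hl : x - ε / 2 ∈ s := hball (by rw [Real.ball_eq_Ioo]; constructor <;> linarith)
    have hu : x + ε / 2 ∈ s := hball (by rw [Real.ball_eq_Ioo]; constructor <;> linarith)
    exact Filter.mem_of_superset
      (Icc_mem_nhds (hf hl hx (by linarith)) (hf hx hu (by linarith))) (hfc.surjOn_Icc hl hu)
  have hinv_mono : StrictMonoOn (invFunOn f s) (f '' s) := by
    rintro _ ⟨y, hy, rfl⟩ _ ⟨z, hz, rfl⟩ hyz
    rw [hleft hy, hleft hz]
    exact (hf.lt_iff_lt hy hz).mp hyz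
  have hcont : ContinuousAt (invFunOn f s) (f x) :=
    hinv_mono.continuousAt_of_image_mem_nhds himage
      (by rw [hleft.image_image, hleft hx]; exact hs.mem_nhds hx)
  refine HasDerivAt.of_local_left_inverse hcont (by rwa [hleft hx]) hf' ?_
  filter_upwards [himage] with _ ⟨y, hy, hfy⟩
  rw [← hfy, hleft hy]

theorem rpow_sub_rpow_le_mul_sub {r c x : ℝ} (hr : 1 ≤ r) (hc : 0 ≤ c) (hcx : c ≤ x) :
    x ^ r - c ^ r ≤ r * x ^ (r - 1) * (x - c) := by
  rcases hcx.eq_or_lt with rfl | hcx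
  · simp
  have hslope := (convexOn_rpow hr).slope_le_of_hasDerivAt hc (hc.trans hcx.le) hcx
    (Real.hasDerivAt_rpow_const (Or.inr hr))
  rwa [slope_def_field, div_le_iff₀ (sub_pos.mpr hcx)] at hslope

theorem rpow_one_div_rpow_of_nonneg {x r : ℝ} (hx : 0 ≤ x) (hr : r ≠ 0) :
    (x ^ (1 / r)) ^ r = x := by
  rw [one_div, Real.rpow_inv_rpow hx hr]

section Ffun

variable {a b r c A : ℝ}

theorem mul_abs_rpow_sub_pos (hb : 0 < b) (hc : 0 ≤ c) (hcr : c ^ r = a / b) (hr : 0 < r)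
    {u : ℝ} (hu : u < -c) : 0 < b * |u| ^ r - a := by
  have hcu : c < |u| := by rw [abs_of_neg (by linarith)]; linarith
  have hpow : a / b < |u| ^ r := hcr ▸ Real.rpow_lt_rpow hc hcu hr
  rw [div_lt_iff₀ hb] at hpow
  linarith

theorem continuousOn_integrand (hb : 0 < b) (hc : 0 ≤ c) (hcr : c ^ r = a / b) (hr : 0 < r) :
    ContinuousOn (fun u : ℝ => 1 / (b * |u| ^ r - a)) (Iio (-c)) := by
  intro u hu
  have hpow : ContinuousAt (fun u : ℝ => |u| ^ r) u :=
    (Real.continuousAt_rpow_const _ _ (Or.inr hr.le)).comp continuous_abs.continuousAt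
  exact (continuousAt_const.div ((hpow.const_mul b).sub continuousAt_const)
    (mul_abs_rpow_sub_pos hb hc hcr hr hu).ne').continuousWithinAt

theorem intervalIntegrable_integrand (hb : 0 < b) (hc : 0 ≤ c) (hcr : c ^ r = a / b)
    (hr : 0 < r) {x y : ℝ} (hx : x < -c) (hy : y < -c) :
    IntervalIntegrable (fun u : ℝ => 1 / (b * |u| ^ r - a)) volume x y :=
  ((continuousOn_integrand hb hc hcr hr).mono
    fun _ hu => lt_of_le_of_lt hu.2 (max_lt hx hy)).intervalIntegrable

theorem Ffun_hasDerivAt (hb : 0 < b) (hc : 0 ≤ c) (hcr : c ^ r = a / b) (hr : 0 < r)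
    (hA : c < A) {ξ : ℝ} (hξ : ξ < -c) :
    HasDerivAt (Ffun a b r A) (1 / (b * |ξ| ^ r - a)) ξ :=
  have hcont := continuousOn_integrand hb hc hcr hr
  integral_hasDerivAt_right (intervalIntegrable_integrand hb hc hcr hr (by linarith) hξ)
    (hcont.stronglyMeasurableAtFilter isOpen_Iio ξ hξ)
    (hcont.continuousAt (Iio_mem_nhds hξ))

theorem Ffun_continuousOn (hb : 0 < b) (hc : 0 ≤ c) (hcr : c ^ r = a / b) (hr : 0 < r)
    (hA : c < A) : ContinuousOn (Ffun a b r A) (Iio (-c)) :=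
  fun _ hξ => (Ffun_hasDerivAt hb hc hcr hr hA hξ).continuousAt.continuousWithinAt

theorem Ffun_strictMonoOn (hb : 0 < b) (hc : 0 ≤ c) (hcr : c ^ r = a / b) (hr : 0 < r)
    (hA : c < A) : StrictMonoOn (Ffun a b r A) (Iio (-c)) := by
  refine strictMonoOn_of_deriv_pos (convex_Iio _) (Ffun_continuousOn hb hc hcr hr hA) ?_
  intro ξ hξ
  rw [interior_Iio] at hξ
  rw [(Ffun_hasDerivAt hb hc hcr hr hA hξ).deriv]
  exact one_div_pos.mpr (mul_abs_rpow_sub_pos hb hc hcr hr hξ)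

theorem inv_mul_inv_le_integrand (hb : 0 < b) (hc : 0 ≤ c) (hcr : c ^ r = a / b) (hr : 1 ≤ r)
    {u : ℝ} (hAu : -A ≤ u) (hu : u < -c) :
    (b * r * A ^ (r - 1))⁻¹ * (-c - u)⁻¹ ≤ 1 / (b * |u| ^ r - a) := by
  have habs : |u| = -u := abs_of_neg (by linarith)
  have ha : a = b * c ^ r := by rw [hcr]; field_simp
  have hpow : (-u) ^ (r - 1) ≤ A ^ (r - 1) :=
    Real.rpow_le_rpow (by linarith) (by linarith) (by linarith)
  have hconv := rpow_sub_rpow_le_mul_sub hr hc (show c ≤ -u by linarith)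
  have hbound : b * |u| ^ r - a ≤ b * r * A ^ (r - 1) * (-c - u) := by
    rw [habs, ha]
    nlinarith [mul_le_mul_of_nonneg_left hpow (by nlinarith : (0 : ℝ) ≤ r * (-u - c))]
  rw [← mul_inv, one_div]
  exact inv_anti₀ (mul_abs_rpow_sub_pos hb hc hcr (by linarith) hu) hbound

theorem exists_le_Ffun (hb : 0 < b) (hc : 0 ≤ c) (hcr : c ^ r = a / b) (hr : 1 ≤ r)
    (hA : c < A) {s : ℝ} (hs : 0 ≤ s) : ∃ ξ ∈ Ico (-A) (-c), s ≤ Ffun a b r A ξ := by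
  set K := b * r * A ^ (r - 1)
  have hK : 0 < K := by have := Real.rpow_pos_of_pos (hc.trans_lt hA) (r - 1); positivity
  have hexp : Real.exp (-(K * s)) ≤ 1 := Real.exp_le_one_iff.mpr (by nlinarith)
  have hδ : 0 < (A - c) * Real.exp (-(K * s)) := by
    have := Real.exp_pos (-(K * s)); nlinarith
  set ξ := -c - (A - c) * Real.exp (-(K * s))
  have hξ : ξ ∈ Ico (-A) (-c) := ⟨by nlinarith, by linarith⟩
  refine ⟨ξ, hξ, ?_⟩
  -- `ξ` is chosen so that the comparison integral `K⁻¹ log ((A - c) / (-c - ξ))` equals `s`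
  calc s = ∫ u in (-A)..ξ, K⁻¹ * (-c - u)⁻¹ := by
        rw [intervalIntegral.integral_const_mul, intervalIntegral.integral_comp_sub_left
          (fun x => x⁻¹), integral_inv_of_pos (by linarith) (by linarith),
          show -c - -A = A - c by ring, show -c - ξ = (A - c) * Real.exp (-(K * s)) by ring,
          div_mul_cancel_left₀ (by linarith), Real.log_inv, Real.log_exp]
        field_simp
    _ ≤ Ffun a b r A ξ := by
        refine integral_mono_on hξ.1 ?_
          (intervalIntegrable_integrand hb hc hcr (by linarith) (by linarith) hξ.2)
          fun u hu => inv_mul_inv_le_integrand hb hc hcr hr hu.1 (hu.2.trans_lt hξ.2)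
        refine ContinuousOn.intervalIntegrable (continuousOn_const.mul
          (ContinuousOn.inv₀ (by fun_prop) fun u hu => ?_))
        rw [uIcc_of_le hξ.1] at hu
        linarith [hu.2]

theorem Ffun_surjOn (hb : 0 < b) (hc : 0 ≤ c) (hcr : c ^ r = a / b) (hr : 1 ≤ r)
    (hA : c < A) : SurjOn (Ffun a b r A) (Ico (-A) (-c)) (Ici 0) := by
  intro s hs
  obtain ⟨ξ, hξ, hsξ⟩ := exists_le_Ffun hb hc hcr hr hA hs
  have hcont :=
    (Ffun_continuousOn hb hc hcr (by linarith) hA).mono (Ico_subset_Iio_self (a := -A))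
  exact hcont.surjOn_Icc (left_mem_Ico.mpr (by linarith)) hξ
    ⟨by rw [Ffun, integral_same]; exact hs, hsξ⟩

end Ffun

section ysol

variable {a b r A T : ℝ}

theorem ysol_mem_and_Ffun_ysol (ha : 0 ≤ a) (hb : 0 < b) (hr : 1 < r)
    (hA : (a / b) ^ (1 / r) < A) {t : ℝ} (ht : t ≤ T) :
    ysol a b r A T t ∈ Ico (-A) (-((a / b) ^ (1 / r))) ∧
      Ffun a b r A (ysol a b r A T t) = T - t := by
  have hpre := Ffun_surjOn hb (Real.rpow_nonneg (div_nonneg ha hb.le) _)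
    (rpow_one_div_rpow_of_nonneg (div_nonneg ha hb.le) (zero_lt_one.trans hr).ne') hr.le hA
    (mem_Ici.mpr (sub_nonneg.mpr ht))
  exact ⟨invFunOn_mem hpre, invFunOn_eq hpre⟩

theorem hasDerivWithinAt_ysol (ha : 0 ≤ a) (hb : 0 < b) (hr : 1 < r)
    (hA : (a / b) ^ (1 / r) < A) {t : ℝ} (ht : t ≤ T) :
    HasDerivWithinAt (ysol a b r A T) (a - b * |ysol a b r A T t| ^ r) (Iic T) t := by
  set c := (a / b) ^ (1 / r)
  have hc : 0 ≤ c := Real.rpow_nonneg (div_nonneg ha hb.le) _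
  have hcr : c ^ r = a / b :=
    rpow_one_div_rpow_of_nonneg (div_nonneg ha hb.le) (zero_lt_one.trans hr).ne'
  have hmono := Ffun_strictMonoOn hb hc hcr (by linarith) hA
  obtain ⟨hmem, hF⟩ := ysol_mem_and_Ffun_ysol ha hb hr hA ht
  -- the inverse function rule needs an open domain, so pass from `Ico (-A) (-c)` to `Iio (-c)`
  have hy :
      EqOn (ysol a b r A T) (fun u => invFunOn (Ffun a b r A) (Iio (-c)) (T - u)) (Iic T) := by
    intro u hu
    obtain ⟨hmem', hF'⟩ := ysol_mem_and_Ffun_ysol ha hb hr hA hu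
    dsimp only
    rw [← hF', hmono.injOn.leftInvOn_invFunOn (Ico_subset_Iio_self hmem')]
  have hinv := hmono.hasDerivAt_invFunOn isOpen_Iio
    (Ffun_continuousOn hb hc hcr (by linarith) hA) hmem.2
    (Ffun_hasDerivAt hb hc hcr (by linarith) hA hmem.2)
    (one_div_pos.mpr (mul_abs_rpow_sub_pos hb hc hcr (by linarith) hmem.2)).ne'
  rw [hF] at hinv
  have hval :
      a - b * |ysol a b r A T t| ^ r = (1 / (b * |ysol a b r A T t| ^ r - a))⁻¹ * -1 := by
    rw [one_div, inv_inv]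
    ring
  rw [hval]
  exact (hinv.comp t ((hasDerivAt_id t).const_sub T)).hasDerivWithinAt.congr hy (hy ht)

theorem ysol_self (ha : 0 ≤ a) (hb : 0 < b) (hr : 1 < r) (hA : (a / b) ^ (1 / r) < A) :
    ysol a b r A T T = -A := by
  have hmono := Ffun_strictMonoOn hb (Real.rpow_nonneg (div_nonneg ha hb.le) _)
    (rpow_one_div_rpow_of_nonneg (div_nonneg ha hb.le) (zero_lt_one.trans hr).ne')
    (by linarith) hA
  have hF : Ffun a b r A (-A) = 0 := integral_same
  rw [ysol, sub_self, ← hF]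
  exact (hmono.injOn.mono Ico_subset_Iio_self).leftInvOn_invFunOn
    (left_mem_Ico.mpr (neg_lt_neg hA))

end ysol

theorem stmt_2_general (a b r T A : ℝ) (ha : 0 < a) (hb : 0 < b) (hr : 1 < r)
    (hA : (a / b) ^ (1 / r) < A) :
    (∀ t ∈ Set.Icc (0:ℝ) T,
        HasDerivWithinAt (ysol a b r A T)
          (a - b * |ysol a b r A T t| ^ r) (Set.Icc (0:ℝ) T) t) ∧
    ysol a b r A T T = -A :=
  ⟨fun _ ht => (hasDerivWithinAt_ysol ha.le hb hr hA ht.2).mono Icc_subset_Iic_self,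
    ysol_self ha.le hb hr hA⟩

/-- y(t) := F⁻¹(T - t) is differentiable on [0,T] and solves the
terminal value problem y' = a - b|y|^r, y(T) = -A. -/
theorem stmt_2 (a b r T A : ℝ) (ha : 0 < a) (hb : 0 < b) (hr : 1 < r)
    (hT : 0 < T) (hA : (a / b) ^ (1 / r) < A) :
    (∀ t ∈ Set.Icc (0:ℝ) T,
        HasDerivWithinAt (ysol a b r A T)
          (a - b * |ysol a b r A T t| ^ r) (Set.Icc (0:ℝ) T) t) ∧
    ysol a b r A T T = -A :=
  stmt_2_general a b r T A ha hb hr hA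
end

section
/- Let a, b > 0, r > 1, T > 0, A > (a/b)^{1/r}, and let y be the unique solution of the terminal value problem y'(t) = a − b|y(t)|^r on [0,T], y(T) = −A. Then for every t ∈ [0,T], |y(t)| ≥ (A^{1−r} + b(r−1)(T−t))^{1/(1−r)}, equivalently |y(t)|^{1−r} ≤ A^{1−r} + b(r−1)(T−t). -/
/-!
The solution stays negative on `[0, T]`: at a zero its slope would be `a > 0`, which is impossible
at the last point where it is `≥ 0`. Then `u = -y > 0` satisfies `u' = b u^r - a ≤ b u^r`, so
`(u^(1-r))' = (1-r) u^(-r) u' ≥ -b (r-1)`; integrating this from `t` to `T` gives the bound on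
`|y t|^(1-r)`, and raising it to the negative power `1/(1-r)` gives the bound on `|y t|`.
-/

open Set Filter Topology

theorem neg_on_Icc_of_deriv_pos_at_zeros {f f' : ℝ → ℝ} {a b : ℝ}
    (hf : ∀ t ∈ Icc a b, HasDerivWithinAt f (f' t) (Icc a b) t)
    (hf' : ∀ t ∈ Icc a b, f t = 0 → 0 < f' t) (hb : f b < 0) :
    ∀ t ∈ Icc a b, f t < 0 := by
  by_contra! ⟨t, ht, hft⟩
  have hcont : ContinuousOn f (Icc a b) := fun s hs => (hf s hs).continuousWithinAt
  set S := Icc t b ∩ f ⁻¹' Ici 0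
  have hS : IsClosed S := (hcont.mono (Icc_subset_Icc_left ht.1)).preimage_isClosed_of_isClosed
    isClosed_Icc isClosed_Ici
  have hSbdd : BddAbove S := ⟨b, fun s hs => hs.1.2⟩
  have hτ : sSup S ∈ S := hS.csSup_mem ⟨t, ⟨le_rfl, ht.2⟩, hft⟩ hSbdd
  set τ := sSup S
  have hτab : τ ∈ Icc a b := ⟨ht.1.trans hτ.1.1, hτ.1.2⟩
  have hτb : τ < b := hτ.1.2.lt_of_ne fun h => (h ▸ hτ.2 : 0 ≤ f b).not_gt hb
  have hafter : ∀ u ∈ Ioc τ b, f u < 0 := fun u hu => by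
    by_contra! h
    exact hu.1.not_ge (le_csSup hSbdd ⟨⟨hτ.1.1.trans hu.1.le, hu.2⟩, h⟩)
  have : (𝓝[Ioc τ b] τ).NeBot := left_nhdsWithin_Ioc_neBot hτb
  have hτ0 : f τ = 0 := by
    have hlim : Tendsto f (𝓝[Ioc τ b] τ) (𝓝 (f τ)) :=
      (hcont τ hτab).mono (Ioc_subset_Icc_self.trans (Icc_subset_Icc_left hτab.1))
    exact le_antisymm
      (le_of_tendsto hlim (eventually_mem_nhdsWithin.mono fun u hu => (hafter u hu).le)) hτ.2
  have hmax : IsLocalMaxOn f (Icc τ b) τ := by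
    refine eventually_mem_nhdsWithin.mono fun u hu => ?_
    rcases hu.1.eq_or_lt with rfl | h
    · exact le_rfl
    · exact (hafter u ⟨h, hu.2⟩).le.trans hτ0.ge
  have hone : (1 : ℝ) ∈ posTangentConeAt (Icc τ b) τ :=
    one_mem_posTangentConeAt_iff_frequently.2 (Eventually.frequently (Icc_mem_nhdsGT hτb))
  have hnonpos : f' τ ≤ 0 := by
    simpa using
      hmax.hasFDerivWithinAt_nonpos ((hf τ hτab).mono (Icc_subset_Icc_left hτab.1)) hone
  exact hnonpos.not_gt (hf' τ hτab hτ0)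

theorem rpow_one_sub_le_of_deriv_le_mul_rpow {u u' : ℝ → ℝ} {a b c r : ℝ}
    (hr : 1 ≤ r) (hu : ∀ s ∈ Icc a b, 0 < u s)
    (hu' : ∀ s ∈ Icc a b, HasDerivWithinAt u (u' s) (Icc a b) s)
    (hle : ∀ s ∈ Icc a b, u' s ≤ c * u s ^ r) :
    ∀ t ∈ Icc a b, u t ^ (1 - r) ≤ u b ^ (1 - r) + c * (r - 1) * (b - t) := by
  intro t ht
  set g : ℝ → ℝ := fun s => u s ^ (1 - r) + c * (r - 1) * s
  have hg : ∀ s ∈ Icc a b, HasDerivWithinAt g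
      (u' s * (1 - r) * u s ^ (1 - r - 1) + c * (r - 1)) (Icc a b) s := fun s hs =>
    ((hu' s hs).rpow_const (p := 1 - r) (Or.inl (hu s hs).ne')).add
      (hasDerivAt_const_mul (c * (r - 1))).hasDerivWithinAt
  have hg' : ∀ s ∈ Icc a b, 0 ≤ u' s * (1 - r) * u s ^ (1 - r - 1) + c * (r - 1) := by
    intro s hs
    have hinv : u s ^ r * u s ^ (1 - r - 1) = 1 := by
      rw [← Real.rpow_add (hu s hs)]; simp
    have hv : 0 ≤ u s ^ (1 - r - 1) := (Real.rpow_pos_of_pos (hu s hs) _).le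
    calc 0 ≤ (c * u s ^ r - u' s) * ((r - 1) * u s ^ (1 - r - 1)) :=
          mul_nonneg (by linarith [hle s hs]) (mul_nonneg (by linarith) hv)
      _ = _ := by linear_combination c * (r - 1) * hinv
  have hmono : MonotoneOn g (Icc a b) :=
    monotoneOn_of_hasDerivWithinAt_nonneg (convex_Icc a b)
      (fun s hs => (hg s hs).continuousWithinAt)
      (fun s hs => (hg s (interior_subset hs)).mono interior_subset)
      (fun s hs => hg' s (interior_subset hs))
  have := hmono ht ⟨ht.1.trans ht.2, le_rfl⟩ ht.2
  simp only [g] at this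
  linarith

theorem stmt_4_general (a b r T A : ℝ) (ha : 0 < a) (hb : 0 < b) (hr : 1 < r)
    (hA : (a / b) ^ (1 / r) < A)
    (y : ℝ → ℝ)
    (hy : ∀ t ∈ Set.Icc (0:ℝ) T,
      HasDerivWithinAt y (a - b * |y t| ^ r) (Set.Icc (0:ℝ) T) t)
    (hyT : y T = -A) :
    ∀ t ∈ Set.Icc (0:ℝ) T,
      (A ^ (1 - r) + b * (r - 1) * (T - t)) ^ (1 / (1 - r)) ≤ |y t| ∧
      |y t| ^ (1 - r) ≤ A ^ (1 - r) + b * (r - 1) * (T - t) := by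
  intro t ht
  have hA0 : 0 < A := (Real.rpow_nonneg (div_pos ha hb).le _).trans_lt hA
  have hneg : ∀ s ∈ Icc 0 T, y s < 0 := by
    refine neg_on_Icc_of_deriv_pos_at_zeros hy (fun s _ hs => ?_) (by linarith)
    rwa [hs, abs_zero, Real.zero_rpow (by linarith), mul_zero, sub_zero]
  have hbound := rpow_one_sub_le_of_deriv_le_mul_rpow (u := fun s => -y s) (c := b) hr.le
    (fun s hs => neg_pos.2 (hneg s hs)) (fun s hs => (hy s hs).neg)
    (fun s hs => by rw [abs_of_neg (hneg s hs)]; linarith) t ht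
  simp only [hyT, neg_neg] at hbound
  rw [abs_of_neg (hneg t ht)]
  refine ⟨?_, hbound⟩
  have hM : 0 < A ^ (1 - r) + b * (r - 1) * (T - t) :=
    (Real.rpow_pos_of_pos (neg_pos.2 (hneg t ht)) _).trans_le hbound
  rw [one_div, Real.rpow_inv_le_iff_of_neg hM (neg_pos.2 (hneg t ht)) (by linarith)]
  exact hbound

/-- lower bound on |y| for the solution of the terminal value
problem y' = a - b|y|^r, y(T) = -A. -/
theorem stmt_4 (a b r T A : ℝ) (ha : 0 < a) (hb : 0 < b) (hr : 1 < r)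
    (hT : 0 < T) (hA : (a / b) ^ (1 / r) < A)
    (y : ℝ → ℝ)
    (hy : ∀ t ∈ Set.Icc (0:ℝ) T,
      HasDerivWithinAt y (a - b * |y t| ^ r) (Set.Icc (0:ℝ) T) t)
    (hyT : y T = -A) :
    ∀ t ∈ Set.Icc (0:ℝ) T,
      (A ^ (1 - r) + b * (r - 1) * (T - t)) ^ (1 / (1 - r)) ≤ |y t| ∧
      |y t| ^ (1 - r) ≤ A ^ (1 - r) + b * (r - 1) * (T - t) :=
  stmt_4_general a b r T A ha hb hr hA y hy hyT
end

section
/- Let a, b > 0, r > 1, T > 0, A > (a/b)^{1/r}, and let y be the unique solution of the terminal value problem y'(t) = a − b|y(t)|^r on [0,T], y(T) = −A. Then for every t ∈ [0,T], |y(t)| ≤ (a(r−1)T/(a/b)^{1/r} + 1)^{1/(r−1)} · (b(r−1)(T−t) + A^{1−r})^{1/(1−r)}. -/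
/-!
Below the equilibrium `-c`, `c = (a/b)^(1/r)`, the solution is trapped: `y(T) = -A < -c` and `-c`
cannot be crossed, so `y ≤ -c` on `[0, T]`. Then `w = |y|^(1-r)` satisfies `w' ≤ α w - β` with
`α = a(r-1)/c`, `β = b(r-1)`, since `|y|^(-r) ≤ |y|^(1-r)/c`. The rational function
`(β(T-t) + A^(1-r)) / (α(T-t) + 1)` is a subsolution of `w' = α w - β` with the same terminal value
(this uses `α A^(1-r) ≤ β`, i.e. `A ≥ c`), so backward comparison puts it below `w`. Replacing the
denominator by `αT + 1` and raising to the negative power `1/(1-r)` gives the bound.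
-/

open Set Real

theorem le_neg_of_hasDerivWithinAt_sub_mul_abs_rpow {a b c r p q : ℝ} {y : ℝ → ℝ}
    (hb : 0 < b) (hr : 0 < r) (hc : 0 < c) (hcr : b * c ^ r = a)
    (hy : ∀ t ∈ Icc p q, HasDerivWithinAt y (a - b * |y t| ^ r) (Icc p q) t)
    (hq : y q ≤ -c) : ∀ t ∈ Icc p q, y t ≤ -c := by
  intro t ht
  by_contra! hlt
  obtain ⟨ε, hε0, hεc, hεt⟩ : ∃ ε, 0 < ε ∧ ε < c ∧ ε ≤ y t + c :=
    ⟨min (y t + c) (c / 2), lt_min (by linarith) (by positivity),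
      (min_le_right _ _).trans_lt (by linarith), min_le_left _ _⟩
  have hsub : Icc t q ⊆ Icc p q := Icc_subset_Icc_left ht.1
  have hcont : ContinuousOn (fun s => -y s) (Icc t q) :=
    fun s hs => (hy s (hsub hs)).continuousWithinAt.neg.mono hsub
  have hderiv (s : ℝ) (hs : s ∈ Ico t q) :
      HasDerivWithinAt (fun s => -y s) (-(a - b * |y s| ^ r)) (Ici s) s :=
    (hy s (hsub (Ico_subset_Icc_self hs))).neg.mono_of_mem_nhdsWithin
      (Icc_mem_nhdsGE_of_mem ⟨ht.1.trans hs.1, hs.2⟩)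
  -- `-c + ε` lies strictly between the equilibrium `-c` and `0`, where `y` increases
  have hbarrier (s : ℝ) (_ : s ∈ Ico t q) (hs : -y s = c - ε) : -(a - b * |y s| ^ r) < 0 := by
    have habs : |y s| = c - ε := by rw [abs_of_neg (by linarith), hs]
    have := rpow_lt_rpow (by linarith) (sub_lt_self c hε0) hr
    rw [habs]
    nlinarith
  have := image_le_of_deriv_right_lt_deriv_boundary hcont hderiv (B := fun _ => c - ε)
    (by linarith) (fun _ => hasDerivAt_const _ _) hbarrier ⟨ht.2, le_rfl⟩
  linarith

theorem le_of_hasDerivWithinAt_sub_mul_le {w ψ w' ψ' : ℝ → ℝ} {α p q : ℝ}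
    (hw : ∀ x ∈ Icc p q, HasDerivWithinAt w (w' x) (Icc p q) x)
    (hψ : ∀ x ∈ Icc p q, HasDerivWithinAt ψ (ψ' x) (Icc p q) x)
    (hle : ∀ x ∈ Icc p q, w' x - α * w x ≤ ψ' x - α * ψ x) (hq : ψ q ≤ w q) :
    ∀ x ∈ Icc p q, ψ x ≤ w x := by
  set F : ℝ → ℝ := fun s => exp (-α * s) * (w s - ψ s)
  have hF (x : ℝ) (hx : x ∈ Icc p q) : HasDerivWithinAt F
      (exp (-α * x) * ((w' x - α * w x) - (ψ' x - α * ψ x))) (Icc p q) x := by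
    have hexp : HasDerivAt (fun s => exp (-α * s)) (exp (-α * x) * -α) x := by
      simpa using ((hasDerivAt_id x).const_mul (-α)).exp
    exact (hexp.hasDerivWithinAt.mul ((hw x hx).sub (hψ x hx))).congr_deriv
      (by rw [Pi.sub_apply]; ring)
  have hanti : AntitoneOn F (Icc p q) :=
    antitoneOn_of_hasDerivWithinAt_nonpos (convex_Icc p q)
      (fun x hx => (hF x hx).continuousWithinAt)
      (fun x hx => (hF x (interior_subset hx)).mono interior_subset)
      (fun x hx => mul_nonpos_of_nonneg_of_nonpos (exp_pos _).le
        (sub_nonpos.2 (hle x (interior_subset hx))))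
  intro x hx
  have hFq : 0 ≤ F q := mul_nonneg (exp_pos _).le (sub_nonneg.2 hq)
  have hFx : 0 ≤ F x := hFq.trans (hanti hx ⟨hx.1.trans hx.2, le_rfl⟩ hx.2)
  exact sub_nonneg.1 ((mul_nonneg_iff_of_pos_left (exp_pos _)).1 hFx)

theorem deriv_rpow_one_sub_sub_mul_le {a b c r u : ℝ} (ha : 0 ≤ a) (hr : 1 ≤ r) (hc : 0 < c)
    (hcu : c ≤ u) :
    -(a - b * u ^ r) * (1 - r) * u ^ (1 - r - 1) - a * (r - 1) / c * u ^ (1 - r) ≤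
      -(b * (r - 1)) := by
  have hu : 0 < u := hc.trans_le hcu
  have hexp : u ^ (1 - r - 1) = u ^ (-r) := by congr 1; ring
  have hsplit : u ^ (1 - r) = u ^ (-r) * u := by
    rw [sub_eq_neg_add, rpow_add hu, rpow_one]
  have hcancel : u ^ r * u ^ (-r) = 1 := by rw [← rpow_add hu]; simp
  have hnonpos : a * (r - 1) * u ^ (-r) * (c - u) ≤ 0 :=
    mul_nonpos_of_nonneg_of_nonpos (by positivity) (by linarith)
  rw [hexp, hsplit]
  have key : -(a - b * u ^ r) * (1 - r) * u ^ (-r) - a * (r - 1) / c * (u ^ (-r) * u) =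
      -(b * (r - 1)) * (u ^ r * u ^ (-r)) + a * (r - 1) * u ^ (-r) * (c - u) / c := by
    field_simp
    ring
  rw [key, hcancel, mul_one]
  linarith [div_nonpos_of_nonpos_of_nonneg hnonpos hc.le]

noncomputable def subsolution (α β A₀ T s : ℝ) : ℝ := (β * (T - s) + A₀) / (α * (T - s) + 1)

theorem hasDerivAt_subsolution {α β A₀ T s : ℝ} (hs : α * (T - s) + 1 ≠ 0) :
    HasDerivAt (subsolution α β A₀ T) ((α * A₀ - β) / (α * (T - s) + 1) ^ 2) s := by
  have hlin (γ δ : ℝ) : HasDerivAt (fun s => γ * (T - s) + δ) (-γ) s := by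
    simpa using (((hasDerivAt_id s).const_sub T).const_mul γ).add_const δ
  exact ((hlin β A₀).div (hlin α 1) hs).congr_deriv (by ring)

theorem neg_le_deriv_sub_mul_subsolution {α β A₀ T s : ℝ} (hαβ : α * A₀ ≤ β)
    (hD : 1 ≤ α * (T - s) + 1) :
    -β ≤ (α * A₀ - β) / (α * (T - s) + 1) ^ 2 - α * subsolution α β A₀ T s := by
  set D := α * (T - s) + 1 with hD_def
  have hD0 : 0 < D := zero_lt_one.trans_le hD
  have hαψ : α * subsolution α β A₀ T s = (α * A₀ - β) / D + β := by
    rw [subsolution, ← hD_def]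
    field_simp
    ring
  have hdiff : (α * A₀ - β) / D ^ 2 - (α * A₀ - β) / D = (β - α * A₀) * (D - 1) / D ^ 2 := by
    field_simp
    ring
  have : 0 ≤ (β - α * A₀) * (D - 1) / D ^ 2 :=
    div_nonneg (mul_nonneg (by linarith) (by linarith)) (sq_nonneg D)
  linarith

theorem mul_rpow_one_sub_le {a b c r A : ℝ} (ha : 0 ≤ a) (hr : 1 ≤ r) (hc : 0 < c) (hcA : c ≤ A)
    (hcr : b * c ^ r = a) : a * (r - 1) / c * A ^ (1 - r) ≤ b * (r - 1) := by
  have hle : A ^ (1 - r) ≤ c ^ (1 - r) := rpow_le_rpow_of_nonpos hc hcA (by linarith)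
  have heq : a * (r - 1) / c * c ^ (1 - r) = b * (r - 1) := by
    rw [rpow_sub hc, rpow_one, ← hcr]
    have : 0 < c ^ r := rpow_pos_of_pos hc r
    field_simp
  calc a * (r - 1) / c * A ^ (1 - r) ≤ a * (r - 1) / c * c ^ (1 - r) := by gcongr
    _ = b * (r - 1) := heq

theorem le_mul_rpow_of_div_le_rpow_one_sub {u f M r : ℝ} (hu : 0 < u) (hf : 0 < f) (hM : 0 < M)
    (hr : 1 < r) (h : f / M ≤ u ^ (1 - r)) : u ≤ M ^ (1 / (r - 1)) * f ^ (1 / (1 - r)) := by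
  have hneg : 1 / (1 - r) ≤ 0 := div_nonpos_of_nonneg_of_nonpos zero_le_one (by linarith)
  calc u = (u ^ (1 - r)) ^ (1 / (1 - r)) := by
        rw [← rpow_mul hu.le, mul_one_div_cancel (by linarith), rpow_one]
    _ ≤ (f / M) ^ (1 / (1 - r)) := rpow_le_rpow_of_nonpos (by positivity) h hneg
    _ = M ^ (1 / (r - 1)) * f ^ (1 / (1 - r)) := by
        rw [div_rpow hf.le hM.le, div_eq_mul_inv, mul_comm, ← rpow_neg hM.le, ← div_neg,
          neg_sub]

theorem subsolution_le_rpow_one_sub {a b c r p T A : ℝ} {y : ℝ → ℝ} (ha : 0 ≤ a) (hr : 1 ≤ r)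
    (hc : 0 < c) (hy : ∀ t ∈ Icc p T, HasDerivWithinAt y (a - b * |y t| ^ r) (Icc p T) t)
    (hyc : ∀ t ∈ Icc p T, y t ≤ -c) (hyT : y T = -A)
    (hαβ : a * (r - 1) / c * A ^ (1 - r) ≤ b * (r - 1)) :
    ∀ t ∈ Icc p T,
      subsolution (a * (r - 1) / c) (b * (r - 1)) (A ^ (1 - r)) T t ≤ (-y t) ^ (1 - r) := by
  have hα : 0 ≤ a * (r - 1) / c := div_nonneg (mul_nonneg ha (by linarith)) hc.le
  have hD (t : ℝ) (ht : t ∈ Icc p T) : 1 ≤ a * (r - 1) / c * (T - t) + 1 := by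
    have := mul_nonneg hα (sub_nonneg.2 ht.2)
    linarith
  have hu (t : ℝ) (ht : t ∈ Icc p T) : c ≤ -y t := by linarith [hyc t ht]
  apply le_of_hasDerivWithinAt_sub_mul_le (α := a * (r - 1) / c)
    (w' := fun t => -(a - b * (-y t) ^ r) * (1 - r) * (-y t) ^ (1 - r - 1))
    (ψ' := fun t => (a * (r - 1) / c * A ^ (1 - r) - b * (r - 1)) /
      (a * (r - 1) / c * (T - t) + 1) ^ 2)
  · intro t ht
    have h := (hy t ht).neg
    rw [abs_of_neg (by linarith [hu t ht])] at h
    exact h.rpow_const (Or.inl (hc.trans_le (hu t ht)).ne')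
  · intro t ht
    exact (hasDerivAt_subsolution (zero_lt_one.trans_le (hD t ht)).ne').hasDerivWithinAt
  · intro t ht
    exact (deriv_rpow_one_sub_sub_mul_le ha hr hc (hu t ht)).trans
      (neg_le_deriv_sub_mul_subsolution hαβ (hD t ht))
  · simp [subsolution, hyT]

theorem stmt_5_general (a b r T A : ℝ) (ha : 0 < a) (hb : 0 < b) (hr : 1 < r)
    (hA : (a / b) ^ (1 / r) < A)
    (y : ℝ → ℝ)
    (hy : ∀ t ∈ Set.Icc (0:ℝ) T,
      HasDerivWithinAt y (a - b * |y t| ^ r) (Set.Icc (0:ℝ) T) t)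
    (hyT : y T = -A) :
    ∀ t ∈ Set.Icc (0:ℝ) T,
      |y t| ≤ (a * (r - 1) * T / (a / b) ^ (1 / r) + 1) ^ (1 / (r - 1)) *
        (b * (r - 1) * (T - t) + A ^ (1 - r)) ^ (1 / (1 - r)) := by
  intro t ht
  have hab : 0 < a / b := div_pos ha hb
  set c := (a / b) ^ (1 / r)
  have hc : 0 < c := rpow_pos_of_pos hab _
  have hcr : b * c ^ r = a := by
    rw [← rpow_mul hab.le, one_div_mul_cancel (by positivity), rpow_one]
    field_simp
  have hyc := le_neg_of_hasDerivWithinAt_sub_mul_abs_rpow hb (by linarith) hc hcr hy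
    (by rw [hyT]; linarith)
  have hw := subsolution_le_rpow_one_sub ha.le hr.le hc hy hyc hyT
    (mul_rpow_one_sub_le ha.le hr.le hc hA.le hcr) t ht
  have hTt : 0 ≤ T - t := sub_nonneg.2 ht.2
  have hφ : 0 < b * (r - 1) * (T - t) + A ^ (1 - r) :=
    add_pos_of_nonneg_of_pos (mul_nonneg (mul_nonneg hb.le (sub_nonneg.2 hr.le)) hTt)
      (rpow_pos_of_pos (hc.trans hA) _)
  have hα : 0 ≤ a * (r - 1) / c := div_nonneg (mul_nonneg ha.le (sub_nonneg.2 hr.le)) hc.le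
  have hD : 1 ≤ a * (r - 1) / c * (T - t) + 1 := le_add_of_nonneg_left (mul_nonneg hα hTt)
  have hDM : a * (r - 1) / c * (T - t) + 1 ≤ a * (r - 1) * T / c + 1 := by
    rw [mul_div_right_comm _ T]
    gcongr
    linarith [ht.1]
  rw [abs_of_neg (by linarith [hyc t ht])]
  exact le_mul_rpow_of_div_le_rpow_one_sub (by linarith [hyc t ht]) hφ (by linarith) hr
    (hw.trans' (div_le_div_of_nonneg_left hφ.le (by linarith) hDM))

/-- upper bound on |y| for the solution of the terminal value
problem y' = a - b|y|^r, y(T) = -A. -/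
theorem stmt_5 (a b r T A : ℝ) (ha : 0 < a) (hb : 0 < b) (hr : 1 < r)
    (hT : 0 < T) (hA : (a / b) ^ (1 / r) < A)
    (y : ℝ → ℝ)
    (hy : ∀ t ∈ Set.Icc (0:ℝ) T,
      HasDerivWithinAt y (a - b * |y t| ^ r) (Set.Icc (0:ℝ) T) t)
    (hyT : y T = -A) :
    ∀ t ∈ Set.Icc (0:ℝ) T,
      |y t| ≤ (a * (r - 1) * T / (a / b) ^ (1 / r) + 1) ^ (1 / (r - 1)) *
        (b * (r - 1) * (T - t) + A ^ (1 - r)) ^ (1 / (1 - r)) :=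
  stmt_5_general a b r T A ha hb hr hA y hy hyT
end

section
/- Let φ ∈ (0,1], set r := 1 + 1/φ, and let a, b > 0 and T > 0. Then there exists a constant C ≥ 1, depending only on a, b, φ and T (but not on A), such that for every A > (a/b)^{1/r} the unique solution y_A of the terminal value problem y'(t) = a − b|y(t)|^r on [0,T], y(T) = −A, satisfies 1/(C (A^{−1/φ} + T − t)^φ) ≤ |y_A(t)| ≤ C/(A^{−1/φ} + T − t)^φ for all t ∈ [0,T]. -/
/-!
Since `x ↦ a - b|x|^(1+p)` is locally Lipschitz, solutions cannot cross the equilibrium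
`-(a/b)^(1/(1+p))`; hence `z = -y` stays above `(a/b)^(1/(1+p))` and increases in `t`.
The Bernoulli substitution `G = z^(-p)` gives `G' = p (a z^(-(1+p)) - b) ∈ [-p b, 0]`, and
`G' ≤ -p b / 2` once `z ≥ (2a/b)^(1/(1+p))`. Integrating back from `G(T) = A^(-p)` makes `G(t)`
comparable to `A^(-p) + T - t` with constants independent of `A`, which gives the bounds on
`|y| = G^(-1/p)` (here `1/p = φ`); below the level `(2a/b)^(1/(1+p))` the upper bound is trivial
because `A^(-p) + T - t ≤ (a/b)^(-p/(1+p)) + T`.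
-/

open Set NNReal

theorem lipschitzOnWith_rpow_Icc {r K : ℝ} (hr : 1 ≤ r) :
    LipschitzOnWith (r * K ^ (r - 1)).toNNReal (fun x : ℝ ↦ x ^ r) (Icc 0 K) := by
  refine (convex_Icc 0 K).lipschitzOnWith_of_nnnorm_hasDerivWithin_le
    (fun x _ ↦ (Real.hasDerivAt_rpow_const (Or.inr hr)).hasDerivWithinAt) fun x hx ↦ ?_
  have hr0 : 0 ≤ r := by linarith
  rw [← NNReal.coe_le_coe, coe_nnnorm,
    Real.norm_of_nonneg (mul_nonneg hr0 (Real.rpow_nonneg hx.1 _))]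
  exact le_trans (mul_le_mul_of_nonneg_left
    (Real.rpow_le_rpow hx.1 hx.2 (by linarith)) hr0) (Real.le_coe_toNNReal _)

theorem lipschitzOnWith_abs_rpow_Icc {r K : ℝ} (hr : 1 ≤ r) :
    LipschitzOnWith (r * K ^ (r - 1)).toNNReal (fun x : ℝ ↦ |x| ^ r) (Icc (-K) K) := by
  have := (lipschitzOnWith_rpow_Icc hr (K := K)).comp lipschitzWith_one_norm.lipschitzOnWith
    (fun x hx ↦ ⟨abs_nonneg x, abs_le.2 hx⟩)
  rw [mul_one] at this
  exact this

theorem exists_lipschitzOnWith_const_sub_mul_abs_rpow_Icc {a b r K : ℝ} (hb : 0 ≤ b) (hr : 1 ≤ r) :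
    ∃ L, LipschitzOnWith L (fun x : ℝ ↦ a - b * |x| ^ r) (Icc (-K) K) := by
  refine ⟨b.toNNReal * (r * K ^ (r - 1)).toNNReal,
    LipschitzOnWith.of_dist_le_mul fun x hx z hz ↦ ?_⟩
  have h := (lipschitzOnWith_abs_rpow_Icc hr (K := K)).dist_le_mul x hx z hz
  rw [Real.dist_eq] at h ⊢
  rw [show a - b * |x| ^ r - (a - b * |z| ^ r) = - (b * (|x| ^ r - |z| ^ r)) by ring, abs_neg,
    abs_mul, abs_of_nonneg hb, NNReal.coe_mul, Real.coe_toNNReal _ hb, mul_assoc]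
  gcongr

theorem ODE_lt_of_lt_right {v : ℝ → ℝ} {s : Set ℝ} {L : ℝ≥0} {f g : ℝ → ℝ} {t₀ T : ℝ}
    (hv : LipschitzOnWith L v s)
    (hf : ∀ t ∈ Icc t₀ T, HasDerivWithinAt f (v (f t)) (Icc t₀ T) t)
    (hfs : ∀ t ∈ Icc t₀ T, f t ∈ s)
    (hg : ∀ t ∈ Icc t₀ T, HasDerivWithinAt g (v (g t)) (Icc t₀ T) t)
    (hgs : ∀ t ∈ Icc t₀ T, g t ∈ s)
    (hT : f T < g T) : ∀ t ∈ Icc t₀ T, f t < g t := by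
  intro t ht
  by_contra! hle
  have hfc : ContinuousOn f (Icc t₀ T) := fun u hu ↦ (hf u hu).continuousWithinAt
  have hgc : ContinuousOn g (Icc t₀ T) := fun u hu ↦ (hg u hu).continuousWithinAt
  obtain ⟨t₁, ht₁, hfg⟩ : ∃ t₁ ∈ Icc t T, f t₁ - g t₁ = 0 :=
    intermediate_value_Icc' ht.2 ((hfc.sub hgc).mono (Icc_subset_Icc_left ht.1))
      ⟨by simp only [Pi.sub_apply]; linarith, by simp only [Pi.sub_apply]; linarith⟩
  have hsub : Icc t₁ T ⊆ Icc t₀ T := Icc_subset_Icc_left (ht.1.trans ht₁.1)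
  have hderiv : ∀ h : ℝ → ℝ, (∀ t ∈ Icc t₀ T, HasDerivWithinAt h (v (h t)) (Icc t₀ T) t) →
      ∀ u ∈ Ico t₁ T, HasDerivWithinAt h (v (h u)) (Ici u) u := fun h hh u hu ↦
    (hh u (hsub (Ico_subset_Icc_self hu))).mono_of_mem_nhdsWithin <|
      Filter.mem_of_superset (Icc_mem_nhdsGE hu.2)
        (Icc_subset_Icc_left (hsub ⟨hu.1, hu.2.le⟩).1)
  have hfgT := ODE_solution_unique_of_mem_Icc_right (v := fun _ ↦ v) (s := fun _ ↦ s)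
    (fun _ _ ↦ hv) (hfc.mono hsub) (hderiv f hf)
    (fun u hu ↦ hfs u (hsub (Ico_subset_Icc_self hu))) (hgc.mono hsub) (hderiv g hg)
    (fun u hu ↦ hgs u (hsub (Ico_subset_Icc_self hu))) (sub_eq_zero.1 hfg)
    (right_mem_Icc.2 ht₁.2)
  exact hT.ne hfgT

theorem mul_sub_le_image_sub_of_le_hasDerivWithinAt {f f' : ℝ → ℝ} {m x y : ℝ} (hxy : x ≤ y)
    (hf : ∀ t ∈ Icc x y, HasDerivWithinAt f (f' t) (Icc x y) t) (hm : ∀ t ∈ Icc x y, m ≤ f' t) :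
    m * (y - x) ≤ f y - f x := by
  have hg : ∀ t ∈ Icc x y, HasDerivWithinAt (fun t ↦ f t - m * t) (f' t - m) (Icc x y) t :=
    fun t ht ↦ by simpa using (hf t ht).fun_sub ((hasDerivWithinAt_id t _).const_mul m)
  have hmono : MonotoneOn (fun t ↦ f t - m * t) (Icc x y) := by
    refine monotoneOn_of_hasDerivWithinAt_nonneg (convex_Icc x y) (f' := fun t ↦ f' t - m)
      (fun t ht ↦ (hg t ht).continuousWithinAt) (fun t ht ↦ ?_) (fun t ht ↦ ?_)
    · rw [interior_Icc] at ht ⊢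
      exact (hg t (Ioo_subset_Icc_self ht)).mono Ioo_subset_Icc_self
    · rw [interior_Icc] at ht
      exact sub_nonneg.2 (hm t (Ioo_subset_Icc_self ht))
  have := hmono (left_mem_Icc.2 hxy) (right_mem_Icc.2 hxy) hxy
  linarith

theorem image_sub_le_mul_sub_of_hasDerivWithinAt_le {f f' : ℝ → ℝ} {M x y : ℝ} (hxy : x ≤ y)
    (hf : ∀ t ∈ Icc x y, HasDerivWithinAt f (f' t) (Icc x y) t) (hM : ∀ t ∈ Icc x y, f' t ≤ M) :
    f y - f x ≤ M * (y - x) := by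
  have := mul_sub_le_image_sub_of_le_hasDerivWithinAt (f := fun t ↦ -f t) hxy
    (fun t ht ↦ (hf t ht).neg) (fun t ht ↦ neg_le_neg (hM t ht))
  linarith

theorem le_mul_rpow_of_rpow_one_div_le {q b r w : ℝ} (hq : 0 ≤ q) (hb : 0 < b) (hr : 0 < r)
    (hw : (q / b) ^ (1 / r) ≤ w) : q ≤ b * w ^ r := by
  have hqb : 0 ≤ q / b := div_nonneg hq hb.le
  have h := Real.rpow_le_rpow (by positivity) hw hr.le
  rw [← Real.rpow_mul hqb, one_div_mul_cancel hr.ne', Real.rpow_one, div_le_iff₀ hb] at h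
  linarith

theorem hasDerivWithinAt_neg_rpow_neg {y : ℝ → ℝ} {s : Set ℝ} {a b p t : ℝ}
    (hy : HasDerivWithinAt y (a - b * |y t| ^ (1 + p)) s t) (hyt : y t < 0) :
    HasDerivWithinAt (fun u ↦ (-y u) ^ (-p)) (p * (a * (-y t) ^ (-(1 + p)) - b)) s t := by
  have hz : 0 < -y t := neg_pos.2 hyt
  convert hy.fun_neg.rpow_const (p := -p) (Or.inl hz.ne') using 1
  rw [abs_of_neg hyt, show -p - 1 = -(1 + p) by ring, Real.rpow_neg hz.le]
  field_simp

theorem one_div_rpow_one_div_le_of_rpow_neg_le {p x z : ℝ} (hp : 0 < p) (hx : 0 < x) (hz : 0 < z)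
    (h : z ^ (-p) ≤ x) : 1 / x ^ (1 / p) ≤ z := by
  rw [← (Real.rpow_inv_le_iff_of_neg hx hz (neg_lt_zero.2 hp)), inv_neg, Real.rpow_neg hx.le] at h
  simpa only [one_div] using h

theorem le_one_div_rpow_one_div_of_le_rpow_neg {p x z : ℝ} (hp : 0 < p) (hx : 0 < x) (hz : 0 < z)
    (h : x ≤ z ^ (-p)) : z ≤ 1 / x ^ (1 / p) := by
  rw [← (Real.le_rpow_inv_iff_of_neg hz hx (neg_lt_zero.2 hp)), inv_neg, Real.rpow_neg hx.le] at h
  simpa only [one_div] using h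

structure IsTerminalSolution (a b p t₀ T A : ℝ) (y : ℝ → ℝ) : Prop where
  hasDerivWithinAt : ∀ t ∈ Icc t₀ T, HasDerivWithinAt y (a - b * |y t| ^ (1 + p)) (Icc t₀ T) t
  apply_right : y T = -A

namespace IsTerminalSolution

variable {a b p t₀ T A : ℝ} {y : ℝ → ℝ}

theorem lt_neg (hy : IsTerminalSolution a b p t₀ T A y) (ha : 0 ≤ a) (hb : 0 < b) (hp : 0 ≤ p)
    (hA : (a / b) ^ (1 / (1 + p)) < A) : ∀ t ∈ Icc t₀ T, y t < -(a / b) ^ (1 / (1 + p)) := by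
  set c := (a / b) ^ (1 / (1 + p)) with hc_def
  have hc : 0 ≤ c := by positivity
  have hequilibrium : a - b * |-c| ^ (1 + p) = 0 := by
    rw [abs_neg, abs_of_nonneg hc, hc_def, one_div,
      Real.rpow_inv_rpow (by positivity) (by positivity), mul_div_cancel₀ _ hb.ne', sub_self]
  obtain ⟨K, hK⟩ := isCompact_Icc.exists_bound_of_continuousOn
    (fun t ht ↦ (hy.hasDerivWithinAt t ht).continuousWithinAt : ContinuousOn y (Icc t₀ T))
  obtain ⟨L, hL⟩ := exists_lipschitzOnWith_const_sub_mul_abs_rpow_Icc (a := a) (K := max K c)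
    hb.le (by linarith : 1 ≤ 1 + p)
  refine ODE_lt_of_lt_right (g := fun _ ↦ -c) hL hy.hasDerivWithinAt
    (fun t ht ↦ abs_le.1 ((hK t ht).trans (le_max_left _ _)))
    (fun t _ ↦ hequilibrium ▸ hasDerivWithinAt_const t _ (-c))
    (fun _ _ ↦ ⟨neg_le_neg (le_max_right _ _), by linarith [le_max_right K c]⟩)
    (by rw [hy.apply_right]; linarith)

theorem lt_zero (hy : IsTerminalSolution a b p t₀ T A y) (ha : 0 ≤ a) (hb : 0 < b) (hp : 0 ≤ p)
    (hA : (a / b) ^ (1 / (1 + p)) < A) : ∀ t ∈ Icc t₀ T, y t < 0 := fun t ht ↦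
  (hy.lt_neg ha hb hp hA t ht).trans_le (neg_nonpos.2 (by positivity))

theorem antitoneOn (hy : IsTerminalSolution a b p t₀ T A y) (ha : 0 ≤ a) (hb : 0 < b)
    (hp : 0 ≤ p) (hA : (a / b) ^ (1 / (1 + p)) < A) : AntitoneOn y (Icc t₀ T) := by
  refine antitoneOn_of_hasDerivWithinAt_nonpos (convex_Icc t₀ T)
    (f' := fun t ↦ a - b * |y t| ^ (1 + p))
    (fun t ht ↦ (hy.hasDerivWithinAt t ht).continuousWithinAt) (fun t ht ↦ ?_) (fun t ht ↦ ?_)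
  · rw [interior_Icc] at ht ⊢
    exact (hy.hasDerivWithinAt t (Ioo_subset_Icc_self ht)).mono Ioo_subset_Icc_self
  · rw [interior_Icc] at ht
    have hyt := hy.lt_neg ha hb hp hA t (Ioo_subset_Icc_self ht)
    have := le_mul_rpow_of_rpow_one_div_le ha hb (by linarith : (0 : ℝ) < 1 + p)
      (le_abs.2 (Or.inr (le_neg.1 hyt.le)))
    linarith

theorem rpow_neg_le (hy : IsTerminalSolution a b p t₀ T A y) (ha : 0 ≤ a) (hb : 0 < b)
    (hp : 0 ≤ p) (hA : (a / b) ^ (1 / (1 + p)) < A) {t : ℝ} (ht : t ∈ Icc t₀ T) :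
    (-y t) ^ (-p) ≤ A ^ (-p) + p * b * (T - t) := by
  have hsub : Icc t T ⊆ Icc t₀ T := Icc_subset_Icc_left ht.1
  have hneg : ∀ u ∈ Icc t T, y u < 0 := fun u hu ↦ hy.lt_zero ha hb hp hA u (hsub hu)
  have := mul_sub_le_image_sub_of_le_hasDerivWithinAt (m := -(p * b)) ht.2
    (fun u hu ↦ (hasDerivWithinAt_neg_rpow_neg (hy.hasDerivWithinAt u (hsub hu))
      (hneg u hu)).mono hsub) (fun u hu ↦ ?_)
  · rw [hy.apply_right, neg_neg] at this
    linarith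
  · have : 0 ≤ a * (-y u) ^ (-(1 + p)) :=
      mul_nonneg ha (Real.rpow_nonneg (neg_nonneg.2 (hneg u hu).le) _)
    nlinarith

theorem le_rpow_neg (hy : IsTerminalSolution a b p t₀ T A y) (ha : 0 ≤ a) (hb : 0 < b)
    (hp : 0 ≤ p) (hA : (a / b) ^ (1 / (1 + p)) < A) {t : ℝ} (ht : t ∈ Icc t₀ T)
    (hyt : (2 * a / b) ^ (1 / (1 + p)) ≤ -y t) :
    A ^ (-p) + p * (b / 2) * (T - t) ≤ (-y t) ^ (-p) := by
  have hsub : Icc t T ⊆ Icc t₀ T := Icc_subset_Icc_left ht.1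
  have hneg : ∀ u ∈ Icc t T, y u < 0 := fun u hu ↦ hy.lt_zero ha hb hp hA u (hsub hu)
  have := image_sub_le_mul_sub_of_hasDerivWithinAt_le (M := -(p * (b / 2))) ht.2
    (fun u hu ↦ (hasDerivWithinAt_neg_rpow_neg (hy.hasDerivWithinAt u (hsub hu))
      (hneg u hu)).mono hsub) (fun u hu ↦ ?_)
  · rw [hy.apply_right, neg_neg] at this
    linarith
  · have hzu : 0 < -y u := neg_pos.2 (hneg u hu)
    have hytu : y u ≤ y t := hy.antitoneOn ha hb hp hA ht (hsub hu) hu.1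
    have h2a : 2 * a ≤ b * (-y u) ^ (1 + p) :=
      le_mul_rpow_of_rpow_one_div_le (by positivity) hb (by linarith) (by linarith)
    have : a * (-y u) ^ (-(1 + p)) ≤ b / 2 := by
      rw [Real.rpow_neg hzu.le, ← div_eq_mul_inv, div_le_iff₀ (by positivity)]
      linarith
    nlinarith

theorem one_div_rpow_le_neg (hy : IsTerminalSolution a b p t₀ T A y) (ha : 0 ≤ a) (hb : 0 < b)
    (hp : 0 < p) (hA : (a / b) ^ (1 / (1 + p)) < A) {t : ℝ} (ht : t ∈ Icc t₀ T) :
    1 / (max 1 (p * b) * (A ^ (-p) + T - t)) ^ (1 / p) ≤ -y t := by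
  have hA0 : 0 < A ^ (-p) := Real.rpow_pos_of_pos (lt_of_le_of_lt (by positivity) hA) _
  have hTt : 0 ≤ T - t := sub_nonneg.2 ht.2
  refine one_div_rpow_one_div_le_of_rpow_neg_le hp ?_
    (neg_pos.2 (hy.lt_zero ha hb hp.le hA t ht)) ((hy.rpow_neg_le ha hb hp.le hA ht).trans ?_)
  · exact mul_pos (lt_max_of_lt_left one_pos) (by linarith)
  · nlinarith [le_max_left 1 (p * b), le_max_right 1 (p * b)]

theorem neg_le (hy : IsTerminalSolution a b p t₀ T A y) (ha : 0 ≤ a) (hb : 0 < b) (hp : 0 < p)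
    (hA : (a / b) ^ (1 / (1 + p)) < A) {t : ℝ} (ht : t ∈ Icc t₀ T) :
    -y t ≤ max ((2 * a / b) ^ (1 / (1 + p)))
      (1 / (min 1 (p * (b / 2)) * (A ^ (-p) + T - t)) ^ (1 / p)) := by
  by_cases hz₀ : (2 * a / b) ^ (1 / (1 + p)) ≤ -y t
  · have hA0 : 0 < A ^ (-p) := Real.rpow_pos_of_pos (lt_of_le_of_lt (by positivity) hA) _
    have hTt : 0 ≤ T - t := sub_nonneg.2 ht.2
    refine le_max_of_le_right (le_one_div_rpow_one_div_of_le_rpow_neg hp ?_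
      (neg_pos.2 (hy.lt_zero ha hb hp.le hA t ht))
      (le_trans ?_ (hy.le_rpow_neg ha hb hp.le hA ht hz₀)))
    · exact mul_pos (lt_min one_pos (by positivity)) (by linarith)
    · nlinarith [min_le_left 1 (p * (b / 2)), min_le_right 1 (p * (b / 2))]
  · exact le_max_of_le_left (not_le.1 hz₀).le

end IsTerminalSolution

theorem exists_bounds_of_isTerminalSolution {a b p t₀ T : ℝ} (ha : 0 < a) (hb : 0 < b)
    (hp : 0 < p) :
    ∃ C : ℝ, 1 ≤ C ∧ ∀ A : ℝ, (a / b) ^ (1 / (1 + p)) < A → ∀ y : ℝ → ℝ,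
      IsTerminalSolution a b p t₀ T A y → ∀ t ∈ Icc t₀ T,
        1 / (C * (A ^ (-p) + T - t) ^ (1 / p)) ≤ |y t| ∧
        |y t| ≤ C / (A ^ (-p) + T - t) ^ (1 / p) := by
  set c := (a / b) ^ (1 / (1 + p))
  set M := c ^ (-p) + T - t₀
  set C := max 1 (max ((max 1 (p * b)) ^ (1 / p))
    (max (1 / (min 1 (p * (b / 2))) ^ (1 / p)) ((2 * a / b) ^ (1 / (1 + p)) * M ^ (1 / p))))
  refine ⟨C, le_max_left _ _, fun A hA y hy t ht ↦ ?_⟩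
  have hc : 0 < c := by positivity
  have hγ : 0 < min 1 (p * (b / 2)) := lt_min one_pos (by positivity)
  set E := A ^ (-p) + T - t
  have hE : 0 < E := by linarith [Real.rpow_pos_of_pos (hc.trans hA) (-p), ht.2]
  have hEM : E ≤ M := by
    linarith [Real.rpow_le_rpow_of_nonpos hc hA.le (neg_nonpos.2 hp.le), ht.1]
  rw [abs_of_neg (hy.lt_zero ha.le hb hp.le hA t ht)]
  constructor
  · calc 1 / (C * E ^ (1 / p)) ≤ 1 / (max 1 (p * b) * E) ^ (1 / p) := by
          rw [Real.mul_rpow (by positivity) hE.le]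
          gcongr
          exact le_max_of_le_right (le_max_left _ _)
      _ ≤ -y t := hy.one_div_rpow_le_neg ha.le hb hp hA ht
  · refine (hy.neg_le ha.le hb hp hA ht).trans (max_le ?_ ?_)
    · calc (2 * a / b) ^ (1 / (1 + p))
          ≤ (2 * a / b) ^ (1 / (1 + p)) * M ^ (1 / p) / E ^ (1 / p) := by
            rw [le_div_iff₀ (by positivity)]
            gcongr
        _ ≤ C / E ^ (1 / p) := by
            gcongr
            exact le_max_of_le_right (le_max_of_le_right (le_max_right _ _))
    · calc 1 / (min 1 (p * (b / 2)) * E) ^ (1 / p)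
          = 1 / (min 1 (p * (b / 2))) ^ (1 / p) / E ^ (1 / p) := by
            rw [Real.mul_rpow hγ.le hE.le, div_div]
        _ ≤ C / E ^ (1 / p) := by
            gcongr
            exact le_max_of_le_right (le_max_of_le_right (le_max_left _ _))

theorem stmt_6_general (φ a b T : ℝ) (hφ0 : 0 < φ)
    (ha : 0 < a) (hb : 0 < b) :
    ∃ C : ℝ, 1 ≤ C ∧
      ∀ A : ℝ, (a / b) ^ (1 / (1 + 1 / φ)) < A →
        ∀ y : ℝ → ℝ,
          (∀ t ∈ Set.Icc (0:ℝ) T,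
            HasDerivWithinAt y (a - b * |y t| ^ (1 + 1 / φ)) (Set.Icc (0:ℝ) T) t) →
          y T = -A →
          ∀ t ∈ Set.Icc (0:ℝ) T,
            1 / (C * (A ^ (-1 / φ) + T - t) ^ φ) ≤ |y t| ∧
            |y t| ≤ C / (A ^ (-1 / φ) + T - t) ^ φ := by
  obtain ⟨C, hC, hbound⟩ :=
    exists_bounds_of_isTerminalSolution (t₀ := 0) (T := T) ha hb (one_div_pos.2 hφ0)
  refine ⟨C, hC, fun A hA y hy hyT t ht ↦ ?_⟩
  simpa only [one_div_one_div, neg_div] using hbound A hA y ⟨hy, hyT⟩ t ht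

/-- two-sided blow-up rate, uniform in A, for the solutions of the
terminal value problems y' = a - b|y|^{1+1/φ}, y(T) = -A. -/
theorem stmt_6 (φ a b T : ℝ) (hφ0 : 0 < φ) (hφ1 : φ ≤ 1)
    (ha : 0 < a) (hb : 0 < b) (hT : 0 < T) :
    ∃ C : ℝ, 1 ≤ C ∧
      ∀ A : ℝ, (a / b) ^ (1 / (1 + 1 / φ)) < A →
        ∀ y : ℝ → ℝ,
          (∀ t ∈ Set.Icc (0:ℝ) T,
            HasDerivWithinAt y (a - b * |y t| ^ (1 + 1 / φ)) (Set.Icc (0:ℝ) T) t) →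
          y T = -A →
          ∀ t ∈ Set.Icc (0:ℝ) T,
            1 / (C * (A ^ (-1 / φ) + T - t) ^ φ) ≤ |y t| ∧
            |y t| ≤ C / (A ^ (-1 / φ) + T - t) ^ φ :=
  stmt_6_general φ a b T hφ0 ha hb
end

section
/- Let r > 1, T > 0, a₁ ≥ a₂ > 0, 0 < b₁ ≤ b₂, and let A > 0 satisfy b₁A^r > a₁. Let y₁ be the unique solution of y'(t) = a₁ − b₁|y(t)|^r on [0,T] with y₁(T) = −A, and y₂ the unique solution of y'(t) = a₂ − b₂|y(t)|^r on [0,T] with y₂(T) = −A. Then −A ≤ y₁(t) ≤ y₂(t) ≤ −(a₂/b₂)^{1/r} for every t ∈ [0,T]. -/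
/-!
All three inequalities are instances of one comparison principle: if `y₁, y₂` solve
`y' = aᵢ - bᵢ |y|^r` on `[0, T]` with `a₂ ≤ a₁`, `b₁ ≤ b₂` and `y₁ T ≤ y₂ T`, then `y₁ ≤ y₂`.
The constants `-A` and `-(a₂/b₂)^(1/r)` are solutions, for the coefficients `(b₁ A^r, b₁)` and
`(a₂, b₂)` respectively. The principle holds because `|y|^r` is Lipschitz on the bounded range of
the solutions, so `w = y₁ - y₂` satisfies `w' ≥ -L w` wherever `w > 0`; after reversing time,
fencing `w` by `ε e^{(L+1)t}` and letting `ε → 0` gives `w ≤ 0`.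
-/

open Set Real

lemma rpow_sub_rpow_le_mul_abs_sub {r M x y : ℝ} (hr : 1 ≤ r) (hx : 0 ≤ x) (hy : 0 ≤ y)
    (hxM : x ≤ M) (hyM : y ≤ M) : x ^ r - y ^ r ≤ r * M ^ (r - 1) * |x - y| := by
  have hderiv : ∀ z ∈ Icc 0 M, HasDerivWithinAt (· ^ r) (r * z ^ (r - 1)) (Icc 0 M) z :=
    fun z _ => (hasDerivAt_rpow_const (Or.inr hr)).hasDerivWithinAt
  have hbound : ∀ z ∈ Icc 0 M, ‖r * z ^ (r - 1)‖ ≤ r * M ^ (r - 1) := fun z hz => by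
    rw [Real.norm_of_nonneg (by have := hz.1; positivity)]
    exact mul_le_mul_of_nonneg_left (rpow_le_rpow hz.1 hz.2 (by linarith)) (by linarith)
  exact (le_abs_self _).trans <|
    (convex_Icc 0 M).norm_image_sub_le_of_norm_hasDerivWithin_le hderiv hbound ⟨hy, hyM⟩ ⟨hx, hxM⟩

lemma abs_rpow_sub_abs_rpow_le {r M x y : ℝ} (hr : 1 ≤ r) (hxM : |x| ≤ M) (hyM : |y| ≤ M) :
    |x| ^ r - |y| ^ r ≤ r * M ^ (r - 1) * |x - y| := by
  have hM : 0 ≤ M := (abs_nonneg x).trans hxM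
  calc |x| ^ r - |y| ^ r ≤ r * M ^ (r - 1) * |(|x| - |y|)| :=
        rpow_sub_rpow_le_mul_abs_sub hr (abs_nonneg x) (abs_nonneg y) hxM hyM
    _ ≤ r * M ^ (r - 1) * |x - y| :=
        mul_le_mul_of_nonneg_left (abs_abs_sub_abs_le_abs_sub x y)
          (mul_nonneg (by linarith) (rpow_nonneg hM _))

lemma nonpos_of_deriv_right_le_mul {f f' : ℝ → ℝ} {a b L : ℝ}
    (hf : ContinuousOn f (Icc a b)) (hf' : ∀ x ∈ Ico a b, HasDerivWithinAt f (f' x) (Ici x) x)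
    (ha : f a ≤ 0) (bound : ∀ x ∈ Ico a b, 0 < f x → f' x ≤ L * f x) :
    ∀ x ∈ Icc a b, f x ≤ 0 := by
  intro x hx
  have hB : ∀ ε > 0, f x ≤ ε * exp ((L + 1) * x) := fun ε hε =>
    image_le_of_deriv_right_lt_deriv_boundary (B := fun x => ε * exp ((L + 1) * x)) hf hf'
      (ha.trans (by positivity))
      (fun x => ((hasDerivAt_id x).const_mul (L + 1)).exp.const_mul ε)
      (fun y hy hfy => by
        have hpos : 0 < f y := hfy ▸ by positivity
        calc f' y ≤ L * f y := bound y hy hpos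
          _ < (L + 1) * f y := by linarith
          _ = _ := by rw [hfy, id]; ring) hx
  refine le_of_forall_pos_le_add fun δ hδ => ?_
  simpa [div_mul_cancel₀ _ (exp_pos _).ne'] using hB (δ / exp ((L + 1) * x)) (by positivity)

lemma nonpos_of_neg_mul_le_derivWithin {w w' : ℝ → ℝ} {a b L : ℝ}
    (hw : ∀ t ∈ Icc a b, HasDerivWithinAt w (w' t) (Icc a b) t) (hb : w b ≤ 0)
    (bound : ∀ t ∈ Icc a b, 0 < w t → -L * w t ≤ w' t) : ∀ t ∈ Icc a b, w t ≤ 0 := by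
  have hneg : MapsTo Neg.neg (Icc (-b) (-a)) (Icc a b) := fun x hx =>
    ⟨le_neg_of_le_neg hx.2, neg_le_of_neg_le hx.1⟩
  have hrev := nonpos_of_deriv_right_le_mul (f := w ∘ Neg.neg) (f' := fun x => -w' (-x))
    (a := -b) (b := -a) (L := L)
    (ContinuousOn.comp (fun t ht => (hw t ht).continuousWithinAt) continuousOn_neg hneg)
    (fun x hx => by
      have hcomp := (hw (-x) (hneg (Ico_subset_Icc_self hx))).comp x
        (hasDerivWithinAt_neg x (Icc x (-a))) (fun y hy => hneg ⟨hx.1.trans hy.1, hy.2⟩)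
      exact (hcomp.congr_deriv (by ring)).mono_of_mem_nhdsWithin (Icc_mem_nhdsGE hx.2))
    (by simpa using hb)
    (fun x hx hpos => by
      have hbound := bound (-x) (hneg (Ico_subset_Icc_self hx)) hpos
      simp only [Function.comp_apply]
      linarith)
  intro t ht
  simpa using hrev (-t) ⟨neg_le_neg ht.2, neg_le_neg ht.1⟩

def IsSolutionOn (a b r T : ℝ) (y : ℝ → ℝ) : Prop :=
  ∀ t ∈ Icc 0 T, HasDerivWithinAt y (a - b * |y t| ^ r) (Icc 0 T) t

namespace IsSolutionOn

variable {a b r T : ℝ}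

lemma continuousOn {y : ℝ → ℝ} (hy : IsSolutionOn a b r T y) : ContinuousOn y (Icc 0 T) :=
  fun t ht => (hy t ht).continuousWithinAt

lemma const {c : ℝ} (hc : b * |c| ^ r = a) : IsSolutionOn a b r T fun _ => c :=
  fun t _ => (hasDerivWithinAt_const t _ c).congr_deriv (by rw [hc, sub_self])

theorem le_of_terminal_le {a₁ a₂ b₁ b₂ : ℝ} {y₁ y₂ : ℝ → ℝ} (hr : 1 ≤ r) (ha : a₂ ≤ a₁)
    (hb₁ : 0 ≤ b₁) (hb : b₁ ≤ b₂) (hy₁ : IsSolutionOn a₁ b₁ r T y₁)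
    (hy₂ : IsSolutionOn a₂ b₂ r T y₂) (hT : y₁ T ≤ y₂ T) : ∀ t ∈ Icc 0 T, y₁ t ≤ y₂ t := by
  obtain ⟨M, hM⟩ := isCompact_Icc.exists_bound_of_continuousOn
    (hy₁.continuousOn.prodMk hy₂.continuousOn)
  have hM₁ : ∀ t ∈ Icc 0 T, |y₁ t| ≤ M := fun t ht => (norm_fst_le _).trans (hM t ht)
  have hM₂ : ∀ t ∈ Icc 0 T, |y₂ t| ≤ M := fun t ht => (norm_snd_le _).trans (hM t ht)
  have hdiff := nonpos_of_neg_mul_le_derivWithin (w := fun t => y₁ t - y₂ t)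
    (L := b₁ * (r * M ^ (r - 1))) (fun t ht => (hy₁ t ht).sub (hy₂ t ht)) (by simpa using hT)
    (fun t ht hpos => by
      have hlip := abs_rpow_sub_abs_rpow_le hr (hM₁ t ht) (hM₂ t ht)
      rw [abs_of_pos hpos] at hlip
      have hb₁lip := mul_le_mul_of_nonneg_left hlip hb₁
      have hb₂y₂ := mul_le_mul_of_nonneg_right hb (rpow_nonneg (abs_nonneg (y₂ t)) r)
      linarith)
  intro t ht
  simpa using hdiff t ht

end IsSolutionOn

theorem stmt_7_general (r T a₁ a₂ b₁ b₂ A : ℝ) (hr : 1 < r)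
    (ha₂ : 0 < a₂) (ha : a₂ ≤ a₁) (hb₁ : 0 < b₁) (hb : b₁ ≤ b₂)
    (hA : 0 < A) (hbA : a₁ < b₁ * A ^ r)
    (y₁ y₂ : ℝ → ℝ)
    (hy₁ : ∀ t ∈ Set.Icc (0:ℝ) T,
      HasDerivWithinAt y₁ (a₁ - b₁ * |y₁ t| ^ r) (Set.Icc (0:ℝ) T) t)
    (hy₁T : y₁ T = -A)
    (hy₂ : ∀ t ∈ Set.Icc (0:ℝ) T,
      HasDerivWithinAt y₂ (a₂ - b₂ * |y₂ t| ^ r) (Set.Icc (0:ℝ) T) t)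
    (hy₂T : y₂ T = -A) :
    ∀ t ∈ Set.Icc (0:ℝ) T,
      -A ≤ y₁ t ∧ y₁ t ≤ y₂ t ∧ y₂ t ≤ -((a₂ / b₂) ^ (1 / r)) := by
  have hb₂ : 0 < b₂ := hb₁.trans_le hb
  have hc₀ : 0 ≤ a₂ / b₂ := div_nonneg ha₂.le hb₂.le
  have hc : b₂ * |-(a₂ / b₂) ^ (1 / r)| ^ r = a₂ := by
    rw [abs_neg, abs_of_nonneg (rpow_nonneg hc₀ _), one_div, rpow_inv_rpow hc₀ (by linarith),
      mul_div_cancel₀ _ hb₂.ne']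
  have hcA : (a₂ / b₂) ^ (1 / r) ≤ A := by
    rw [one_div, rpow_inv_le_iff_of_pos hc₀ hA.le (by linarith), div_le_iff₀ hb₂]
    nlinarith [rpow_nonneg hA.le r]
  have hAr : b₁ * |-A| ^ r = b₁ * A ^ r := by rw [abs_neg, abs_of_pos hA]
  intro t ht
  refine ⟨?_, ?_, ?_⟩
  · exact IsSolutionOn.le_of_terminal_le hr.le hbA.le hb₁.le le_rfl (IsSolutionOn.const hAr) hy₁
      (by rw [hy₁T]) t ht
  · exact IsSolutionOn.le_of_terminal_le hr.le ha hb₁.le hb hy₁ hy₂ (by rw [hy₁T, hy₂T]) t ht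
  · exact IsSolutionOn.le_of_terminal_le hr.le le_rfl hb₂.le le_rfl hy₂ (IsSolutionOn.const hc)
      (by rw [hy₂T]; linarith) t ht

/-- comparison of solutions of two terminal value problems. -/
theorem stmt_7 (r T a₁ a₂ b₁ b₂ A : ℝ) (hr : 1 < r) (hT : 0 < T)
    (ha₂ : 0 < a₂) (ha : a₂ ≤ a₁) (hb₁ : 0 < b₁) (hb : b₁ ≤ b₂)
    (hA : 0 < A) (hbA : a₁ < b₁ * A ^ r)
    (y₁ y₂ : ℝ → ℝ)
    (hy₁ : ∀ t ∈ Set.Icc (0:ℝ) T,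
      HasDerivWithinAt y₁ (a₁ - b₁ * |y₁ t| ^ r) (Set.Icc (0:ℝ) T) t)
    (hy₁T : y₁ T = -A)
    (hy₂ : ∀ t ∈ Set.Icc (0:ℝ) T,
      HasDerivWithinAt y₂ (a₂ - b₂ * |y₂ t| ^ r) (Set.Icc (0:ℝ) T) t)
    (hy₂T : y₂ T = -A) :
    ∀ t ∈ Set.Icc (0:ℝ) T,
      -A ≤ y₁ t ∧ y₁ t ≤ y₂ t ∧ y₂ t ≤ -((a₂ / b₂) ^ (1 / r)) :=
  stmt_7_general r T a₁ a₂ b₁ b₂ A hr ha₂ ha hb₁ hb hA hbA y₁ y₂ hy₁ hy₁T hy₂ hy₂T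
end

section
/- Let T, φ, A, ℓ, κ̄ > 0 and q ∈ ℝ. Let z, κ : [0,T] → ℝ be measurable functions with 0 < κ(u) ≤ κ̄ for all u, with |z(u)|·(T − u + A^{−1/φ})^φ ≥ ℓ for all u ∈ [0,T], and such that u ↦ (|z(u)|/κ(u))^{1/φ} is integrable on [0,T]. Define Q(t) := q·exp(−∫_0^t (|z(u)|/κ(u))^{1/φ} du). Then for every t ∈ [0,T], |Q(t)| ≤ |q| · ((T − t + A^{−1/φ})/(T + A^{−1/φ}))^{(ℓ/κ̄)^{1/φ}}. -/
/-!
Since `κ ≤ κ̄`, the hypothesis on `z` bounds the trading rate from below by the deterministic rate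
`c / (T - u + a)` with `a = A^{-1/φ}` and `c = (ℓ/κ̄)^{1/φ}`. Integrating gives
`∫_0^t c / (T - u + a) du = c · log ((T + a) / (T - t + a))`, and exponentiating the negative of this
lower bound is exactly the power `((T - t + a) / (T + a))^c`.
-/

open Real

theorem integral_inv_sub_left {b s t : ℝ} (hs : s < b) (ht : t < b) :
    ∫ u in s..t, (b - u)⁻¹ = log ((b - s) / (b - t)) := by
  rw [intervalIntegral.integral_comp_sub_left (fun x => x⁻¹) b]
  refine integral_inv fun h => ?_
  rcases le_total (b - t) (b - s) with hle | hle
  · rw [Set.uIcc_of_le hle] at h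
    linarith [h.1]
  · rw [Set.uIcc_of_ge hle] at h
    linarith [h.1]

theorem rpow_div_div_le_of_le_mul_rpow {ℓ κ κmax w y φ : ℝ} (hℓ : 0 ≤ ℓ) (hκ : 0 < κ) (hκmax : κ ≤ κmax)
    (hy : 0 < y) (hφ : 0 < φ) (hw : ℓ ≤ w * y ^ φ) :
    (ℓ / κmax) ^ (1 / φ) / y ≤ (w / κ) ^ (1 / φ) := by
  have hyφ : 0 < y ^ φ := rpow_pos_of_pos hy φ
  have hκmax₀ : 0 < κmax := hκ.trans_le hκmax
  have hle : ℓ / κmax / y ^ φ ≤ w / κ :=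
    calc ℓ / κmax / y ^ φ ≤ ℓ / κ / y ^ φ := by gcongr
      _ = ℓ / y ^ φ / κ := div_right_comm ℓ κ _
      _ ≤ w / κ := by gcongr; exact (div_le_iff₀ hyφ).mpr hw
  calc (ℓ / κmax) ^ (1 / φ) / y = (ℓ / κmax / y ^ φ) ^ (1 / φ) := by
        rw [div_rpow (by positivity) hyφ.le, ← rpow_mul hy.le, mul_one_div_cancel hφ.ne',
          rpow_one]
    _ ≤ (w / κ) ^ (1 / φ) := by gcongr

theorem exp_neg_integral_le_rpow {f : ℝ → ℝ} {b c t : ℝ} (ht₀ : 0 ≤ t) (htb : t < b)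
    (hf : IntervalIntegrable f MeasureTheory.volume 0 t)
    (hlow : ∀ u ∈ Set.Icc 0 t, c / (b - u) ≤ f u) :
    exp (-(∫ u in (0:ℝ)..t, f u)) ≤ ((b - t) / b) ^ c := by
  have hb : 0 < b := ht₀.trans_lt htb
  have hbt : 0 < b - t := sub_pos.mpr htb
  have hcont : ContinuousOn (fun u => c / (b - u)) (Set.uIcc 0 t) := by
    refine continuousOn_const.div (by fun_prop) fun u hu => ?_
    rw [Set.uIcc_of_le ht₀] at hu
    linarith [hu.2]
  have hmono : c * log (b / (b - t)) ≤ ∫ u in (0:ℝ)..t, f u := by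
    calc c * log (b / (b - t)) = ∫ u in (0:ℝ)..t, c / (b - u) := by
          simp only [div_eq_mul_inv c, intervalIntegral.integral_const_mul,
            integral_inv_sub_left hb htb, sub_zero]
      _ ≤ ∫ u in (0:ℝ)..t, f u :=
          intervalIntegral.integral_mono_on ht₀ hcont.intervalIntegrable hf hlow
  rw [rpow_def_of_pos (div_pos hbt hb), ← inv_div, log_inv]
  exact exp_le_exp.mpr (by linarith)

theorem stmt_12_general (T φ A ℓ κmax q : ℝ) (hφ : 0 < φ) (hA : 0 < A)
    (hℓ : 0 < ℓ)
    (z κ : ℝ → ℝ)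
    (hκ : ∀ u, 0 < κ u ∧ κ u ≤ κmax)
    (hz : ∀ u ∈ Set.Icc (0:ℝ) T, ℓ ≤ |z u| * (T - u + A ^ (-1 / φ)) ^ φ)
    (hint : IntervalIntegrable (fun u => (|z u| / κ u) ^ (1 / φ))
      MeasureTheory.volume 0 T) :
    ∀ t ∈ Set.Icc (0:ℝ) T,
      |q * Real.exp (-(∫ u in (0:ℝ)..t, (|z u| / κ u) ^ (1 / φ)))| ≤
        |q| * ((T - t + A ^ (-1 / φ)) / (T + A ^ (-1 / φ))) ^
          ((ℓ / κmax) ^ (1 / φ)) := by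
  rintro t ⟨ht₀, htT⟩
  have ha : 0 < A ^ (-1 / φ) := rpow_pos_of_pos hA _
  have hint_t : IntervalIntegrable (fun u => (|z u| / κ u) ^ (1 / φ)) MeasureTheory.volume 0 t :=
    hint.mono_set (by
      rw [Set.uIcc_of_le ht₀, Set.uIcc_of_le (ht₀.trans htT)]
      exact Set.Icc_subset_Icc_right htT)
  have hlow : ∀ u ∈ Set.Icc 0 t,
      (ℓ / κmax) ^ (1 / φ) / (T + A ^ (-1 / φ) - u) ≤ (|z u| / κ u) ^ (1 / φ) := by
    rintro u ⟨hu₀, hut⟩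
    have hzu := hz u ⟨hu₀, hut.trans htT⟩
    rw [sub_add_eq_add_sub] at hzu
    exact rpow_div_div_le_of_le_mul_rpow hℓ.le (hκ u).1 (hκ u).2 (by linarith) hφ hzu
  have hexp := exp_neg_integral_le_rpow ht₀ (by linarith) hint_t hlow
  rw [add_sub_right_comm] at hexp
  rw [abs_mul, abs_of_pos (exp_pos _)]
  exact mul_le_mul_of_nonneg_left hexp (abs_nonneg q)

/-- bound on the optimal inventory process
Q(t) = q exp(-∫_0^t (|z(u)|/κ(u))^{1/φ} du). -/
theorem stmt_12 (T φ A ℓ κmax q : ℝ) (hT : 0 < T) (hφ : 0 < φ) (hA : 0 < A)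
    (hℓ : 0 < ℓ) (hκmax : 0 < κmax)
    (z κ : ℝ → ℝ) (hzm : Measurable z) (hκm : Measurable κ)
    (hκ : ∀ u, 0 < κ u ∧ κ u ≤ κmax)
    (hz : ∀ u ∈ Set.Icc (0:ℝ) T, ℓ ≤ |z u| * (T - u + A ^ (-1 / φ)) ^ φ)
    (hint : IntervalIntegrable (fun u => (|z u| / κ u) ^ (1 / φ))
      MeasureTheory.volume 0 T) :
    ∀ t ∈ Set.Icc (0:ℝ) T,
      |q * Real.exp (-(∫ u in (0:ℝ)..t, (|z u| / κ u) ^ (1 / φ)))| ≤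
        |q| * ((T - t + A ^ (-1 / φ)) / (T + A ^ (-1 / φ))) ^
          ((ℓ / κmax) ^ (1 / φ)) :=
  stmt_12_general T φ A ℓ κmax q hφ hA hℓ z κ hκ hz hint
end
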